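/- arXiv:1112.3983 — 4 statements merged into one kernel-verified Lean document; each statement's English description precedes it below -/
import Mathlib

section
/- Let n ≥ 3 and K > 0. There exists a constant C > 0, depending only on n and K, such that for every w ∈ ℝⁿ with 0 < ‖w‖ ≤ 1/2: ∫_{ {z ∈ ℝⁿ : 2‖w‖ ≤ ‖z‖ ≤ K} } ‖z‖^{2−n} ‖z + w‖^{1−n} dz ≤ C·log(1/‖w‖) if n = 3, and ≤ C·‖w‖^{3−n} if n ≥ 4. -/
/-!
Where `‖z‖ ≥ 2‖w‖` we have `‖z + w‖ ≥ ‖z‖ / 2`, so the integrand is at most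
`2^{n-1} ‖z‖^{3-2n}`. Enlarging the domain to an annulus `2‖w‖ ≤ ‖z‖ ≤ b` with `b ≥ K` and
integrating in polar coordinates leaves `∫_{2‖w‖}^b r^{2-n} dr`, which is `log (b / 2‖w‖)` for
`n = 3` and at most `(2‖w‖)^{3-n} / (n - 3)` for `n ≥ 4`.
-/

open MeasureTheory Set Real Metric Module

theorem half_norm_le_norm_add {E : Type*} [SeminormedAddCommGroup E] {z w : E}
    (h : 2 * ‖w‖ ≤ ‖z‖) : ‖z‖ / 2 ≤ ‖z + w‖ := by
  linarith [norm_le_add_norm_add z w]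

theorem rpow_norm_mul_rpow_norm_add_le {E : Type*} [SeminormedAddCommGroup E] {α β : ℝ}
    (hβ : β ≤ 0) {z w : E} (hz : 0 < ‖z‖) (h : 2 * ‖w‖ ≤ ‖z‖) :
    ‖z‖ ^ α * ‖z + w‖ ^ β ≤ 2 ^ (-β) * ‖z‖ ^ (α + β) := by
  calc ‖z‖ ^ α * ‖z + w‖ ^ β ≤ ‖z‖ ^ α * (‖z‖ / 2) ^ β := by
        gcongr ?_ * ?_
        exact rpow_le_rpow_of_nonpos (by positivity) (half_norm_le_norm_add h) hβ
    _ = 2 ^ (-β) * ‖z‖ ^ (α + β) := by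
        rw [div_rpow hz.le zero_le_two, rpow_add hz, rpow_neg zero_le_two]
        ring

theorem measureReal_ball_pos {X : Type*} [PseudoMetricSpace X] [ProperSpace X]
    [MeasurableSpace X] (μ : Measure X) [μ.IsOpenPosMeasure] [IsFiniteMeasureOnCompacts μ]
    (x : X) {r : ℝ} (hr : 0 < r) : 0 < μ.real (ball x r) :=
  ENNReal.toReal_pos (measure_ball_pos μ x hr).ne' measure_ball_lt_top.ne

section Polar

variable {E : Type*} [NormedAddCommGroup E] [NormedSpace ℝ E] [Nontrivial E]
  [FiniteDimensional ℝ E] [MeasurableSpace E] [BorelSpace E] (μ : Measure E)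
  [μ.IsAddHaarMeasure]

theorem setLIntegral_annulus_rpow_norm (p : ℝ) {a b : ℝ} (ha : 0 < a) (hab : a ≤ b) :
    ∫⁻ z in (‖·‖) ⁻¹' Icc a b, ENNReal.ofReal (‖z‖ ^ p) ∂μ =
      ENNReal.ofReal (finrank ℝ E * μ.real (ball 0 1) *
        ∫ y in a..b, y ^ (p + finrank ℝ E - 1)) := by
  have hS : MeasurableSet ((‖·‖) ⁻¹' Icc a b : Set E) :=
    measurableSet_Icc.preimage measurable_norm
  have hSc : IsCompact ((‖·‖) ⁻¹' Icc a b : Set E) :=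
    (isCompact_closedBall (0 : E) b).of_isClosed_subset (isClosed_Icc.preimage continuous_norm)
      fun z hz => mem_closedBall_zero_iff.2 hz.2
  have hint : IntegrableOn (‖·‖ ^ p) ((‖·‖) ⁻¹' Icc a b) μ :=
    (continuous_norm.continuousOn.rpow_const fun z hz => Or.inl (ha.trans_le hz.1).ne')
      |>.integrableOn_compact hSc
  have hd : 1 ≤ finrank ℝ E := finrank_pos
  rw [← ofReal_integral_eq_lintegral_ofReal hint (ae_of_all _ fun z => by positivity),
    ← integral_indicator hS]
  simp_rw [← Function.comp_apply (f := fun y : ℝ => y ^ p) (g := (‖·‖)),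
    indicator_comp_right (s := Icc a b) (‖·‖)]
  rw [integral_fun_norm_addHaar μ, nsmul_eq_mul, smul_eq_mul, mul_assoc]
  congr 3
  rw [← setIntegral_congr_fun measurableSet_Ioi
      (f := (Icc a b).indicator fun y => y ^ (p + finrank ℝ E - 1)),
    setIntegral_indicator measurableSet_Icc, inter_eq_right.2 ((Icc_subset_Ioi_iff hab).2 ha),
    integral_Icc_eq_integral_Ioc, ← intervalIntegral.integral_of_le hab]
  intro y hy
  by_cases hyab : y ∈ Icc a b
  · simp only [indicator_of_mem hyab, smul_eq_mul]
    rw [← rpow_natCast, ← rpow_add hy, Nat.cast_sub hd]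
    push_cast
    ring_nf
  · simp [indicator_of_notMem hyab]

theorem setLIntegral_far_rpow_norm_mul_rpow_norm_add_le {α β : ℝ} (hβ : β ≤ 0) {w : E}
    (hw : 0 < ‖w‖) {K b : ℝ} (hKb : K ≤ b) (hwb : 2 * ‖w‖ ≤ b) :
    ∫⁻ z in {z : E | 2 * ‖w‖ ≤ ‖z‖ ∧ ‖z‖ ≤ K}, ENNReal.ofReal (‖z‖ ^ α * ‖z + w‖ ^ β) ∂μ ≤
      ENNReal.ofReal (2 ^ (-β) * (finrank ℝ E * μ.real (ball 0 1) *
        ∫ y in 2 * ‖w‖..b, y ^ (α + β + finrank ℝ E - 1))) := by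
  have hS : MeasurableSet ((‖·‖) ⁻¹' Icc (2 * ‖w‖) b : Set E) :=
    measurableSet_Icc.preimage measurable_norm
  calc _ ≤ ∫⁻ z in (‖·‖) ⁻¹' Icc (2 * ‖w‖) b, ENNReal.ofReal (‖z‖ ^ α * ‖z + w‖ ^ β) ∂μ :=
        lintegral_mono_set fun z hz => ⟨hz.1, hz.2.trans hKb⟩
    _ ≤ ∫⁻ z in (‖·‖) ⁻¹' Icc (2 * ‖w‖) b,
          ENNReal.ofReal (2 ^ (-β)) * ENNReal.ofReal (‖z‖ ^ (α + β)) ∂μ :=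
        setLIntegral_mono' hS fun z hz => by
          rw [← ENNReal.ofReal_mul (by positivity)]
          exact ENNReal.ofReal_le_ofReal <|
            rpow_norm_mul_rpow_norm_add_le hβ
              ((by positivity : (0 : ℝ) < 2 * ‖w‖).trans_le hz.1) hz.1
    _ = _ := by
        rw [lintegral_const_mul' _ _ ENNReal.ofReal_ne_top,
          setLIntegral_annulus_rpow_norm μ _ (by positivity) hwb,
          ← ENNReal.ofReal_mul (by positivity)]

end Polar

theorem integral_rpow_le_of_lt_neg_one {r a b : ℝ} (hr : r < -1) (ha : 0 < a) (hb : 0 < b) :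
    ∫ y in a..b, y ^ r ≤ a ^ (r + 1) / -(r + 1) := by
  rw [integral_rpow (Or.inr ⟨hr.ne, notMem_uIcc_of_lt ha hb⟩), ← neg_div_neg_eq]
  gcongr
  · linarith
  · linarith [rpow_nonneg hb.le (r + 1)]

theorem log_div_two_mul_le {b t : ℝ} (hb : 1 ≤ b) (ht : 0 < t) (ht2 : t ≤ 1 / 2) :
    log (b / (2 * t)) ≤ (log b / log 2 + 1) * log (1 / t) := by
  have hlog2 : 0 < log 2 := log_pos one_lt_two
  have hL : log 2 ≤ log (1 / t) := log_le_log two_pos (by rw [le_div_iff₀ ht]; linarith)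
  have hlogb : log b ≤ log b / log 2 * log (1 / t) := by
    calc log b = log b / log 2 * log 2 := by field_simp
      _ ≤ log b / log 2 * log (1 / t) := by gcongr; exact div_nonneg (log_nonneg hb) hlog2.le
  have hsplit : log (b / (2 * t)) = log b - log 2 + log (1 / t) := by
    rw [log_div (by positivity) (by positivity), log_mul two_ne_zero ht.ne', one_div, log_inv]
    ring
  linarith

theorem exists_far_lintegral_le_log (K : ℝ) :
    ∃ C > (0 : ℝ), ∀ w : EuclideanSpace ℝ (Fin 3), 0 < ‖w‖ → ‖w‖ ≤ 1 / 2 →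
      ∫⁻ z in {z : EuclideanSpace ℝ (Fin 3) | 2 * ‖w‖ ≤ ‖z‖ ∧ ‖z‖ ≤ K},
          ENNReal.ofReal (‖z‖ ^ ((2 : ℝ) - 3) * ‖z + w‖ ^ ((1 : ℝ) - 3))
        ≤ ENNReal.ofReal (C * log (1 / ‖w‖)) := by
  obtain ⟨b, hKb, hb⟩ : ∃ b, K ≤ b ∧ 1 ≤ b := ⟨max K 1, le_max_left K 1, le_max_right K 1⟩
  have hvol := measureReal_ball_pos (volume : Measure (EuclideanSpace ℝ (Fin 3))) 0 one_pos
  refine ⟨4 * (3 * volume.real (ball (0 : EuclideanSpace ℝ (Fin 3)) 1)) * (log b / log 2 + 1),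
    mul_pos (by positivity)
      (add_pos_of_nonneg_of_pos (div_nonneg (log_nonneg hb) (log_pos one_lt_two).le) one_pos),
    fun w hw hw2 => ?_⟩
  have h := setLIntegral_far_rpow_norm_mul_rpow_norm_add_le volume (α := 2 - 3) (β := 1 - 3)
    (by norm_num) hw hKb (by linarith : 2 * ‖w‖ ≤ b)
  refine h.trans (ENNReal.ofReal_le_ofReal ?_)
  rw [finrank_euclideanSpace_fin, show (2 : ℝ) - 3 + (1 - 3) + (3 : ℕ) - 1 = -1 by norm_num]
  simp only [rpow_neg_one]
  rw [integral_inv_of_pos (by positivity) (by positivity), Nat.cast_ofNat,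
    show (2 : ℝ) ^ (-(1 - 3 : ℝ)) = 4 by norm_num]
  have := mul_le_mul_of_nonneg_left (log_div_two_mul_le hb hw hw2)
    (by positivity : (0 : ℝ) ≤ 4 * (3 * volume.real (ball (0 : EuclideanSpace ℝ (Fin 3)) 1)))
  linarith

theorem exists_far_lintegral_le_rpow {n : ℕ} (hn : 4 ≤ n) (K : ℝ) :
    ∃ C > (0 : ℝ), ∀ w : EuclideanSpace ℝ (Fin n), 0 < ‖w‖ →
      ∫⁻ z in {z : EuclideanSpace ℝ (Fin n) | 2 * ‖w‖ ≤ ‖z‖ ∧ ‖z‖ ≤ K},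
          ENNReal.ofReal (‖z‖ ^ ((2 : ℝ) - n) * ‖z + w‖ ^ ((1 : ℝ) - n))
        ≤ ENNReal.ofReal (C * ‖w‖ ^ ((3 : ℝ) - n)) := by
  have hn' : (4 : ℝ) ≤ n := by exact_mod_cast hn
  have : NeZero n := ⟨by omega⟩
  have hvol := measureReal_ball_pos (volume : Measure (EuclideanSpace ℝ (Fin n))) 0 one_pos
  refine ⟨2 ^ ((n : ℝ) - 1) * (n * volume.real (ball (0 : EuclideanSpace ℝ (Fin n)) 1)) / (n - 3),
    div_pos (by positivity) (by linarith), fun w hw => ?_⟩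
  have h := setLIntegral_far_rpow_norm_mul_rpow_norm_add_le volume (α := 2 - n) (β := 1 - n)
    (by linarith) hw (le_max_left K (2 * ‖w‖)) (le_max_right _ _)
  refine h.trans (ENNReal.ofReal_le_ofReal ?_)
  rw [finrank_euclideanSpace_fin, show (2 : ℝ) - n + (1 - n) + n - 1 = 2 - n by ring, neg_sub]
  have hint := integral_rpow_le_of_lt_neg_one (r := 2 - n) (a := 2 * ‖w‖) (by linarith)
    (by positivity)
    (lt_max_of_lt_right (by positivity : 0 < 2 * ‖w‖) : 0 < max K (2 * ‖w‖))
  rw [show (2 : ℝ) - n + 1 = 3 - n by ring, show -((3 : ℝ) - n) = n - 3 by ring] at hint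
  have hpow : (2 * ‖w‖) ^ ((3 : ℝ) - n) ≤ ‖w‖ ^ ((3 : ℝ) - n) :=
    rpow_le_rpow_of_nonpos hw (by linarith) (by linarith)
  calc 2 ^ ((n : ℝ) - 1) * (n * volume.real (ball (0 : EuclideanSpace ℝ (Fin n)) 1) *
        ∫ y in 2 * ‖w‖..max K (2 * ‖w‖), y ^ ((2 : ℝ) - n))
      ≤ 2 ^ ((n : ℝ) - 1) * (n * volume.real (ball (0 : EuclideanSpace ℝ (Fin n)) 1) *
          (‖w‖ ^ ((3 : ℝ) - n) / (n - 3))) := by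
        gcongr
        exact hint.trans (div_le_div_of_nonneg_right hpow (by linarith))
    _ = _ := by ring

theorem stmt_5_general (n : ℕ) (hn : 3 ≤ n) (K : ℝ) :
    ∃ C > (0 : ℝ), ∀ w : EuclideanSpace ℝ (Fin n), 0 < ‖w‖ → ‖w‖ ≤ 1 / 2 →
      ((n = 3 →
        (∫⁻ z in {z : EuclideanSpace ℝ (Fin n) | 2 * ‖w‖ ≤ ‖z‖ ∧ ‖z‖ ≤ K},
            ENNReal.ofReal (‖z‖ ^ ((2 : ℝ) - n) * ‖z + w‖ ^ ((1 : ℝ) - n)))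
          ≤ ENNReal.ofReal (C * Real.log (1 / ‖w‖))) ∧
       (4 ≤ n →
        (∫⁻ z in {z : EuclideanSpace ℝ (Fin n) | 2 * ‖w‖ ≤ ‖z‖ ∧ ‖z‖ ≤ K},
            ENNReal.ofReal (‖z‖ ^ ((2 : ℝ) - n) * ‖z + w‖ ^ ((1 : ℝ) - n)))
          ≤ ENNReal.ofReal (C * ‖w‖ ^ ((3 : ℝ) - n)))) := by
  rcases hn.eq_or_lt with rfl | hn4
  · obtain ⟨C, hC, hbound⟩ := exists_far_lintegral_le_log K
    exact ⟨C, hC, fun w hw hw2 => ⟨fun _ => by exact_mod_cast hbound w hw hw2, by omega⟩⟩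
  · obtain ⟨C, hC, hbound⟩ := exists_far_lintegral_le_rpow hn4 K
    exact ⟨C, hC, fun w hw _ => ⟨by omega, fun _ => hbound w hw⟩⟩

/-- Far-field estimate `I₃`: for `n ≥ 3` and `K > 0` there is `C > 0`
(depending only on `n` and `K`) such that for all `w` with `0 < ‖w‖ ≤ 1/2`,
`∫_{2‖w‖ ≤ ‖z‖ ≤ K} ‖z‖^{2−n} ‖z+w‖^{1−n} dz ≤ C log(1/‖w‖)` if `n = 3`,
and `≤ C ‖w‖^{3−n}` if `n ≥ 4`. -/
theorem stmt_5 (n : ℕ) (hn : 3 ≤ n) (K : ℝ) (hK : 0 < K) :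
    ∃ C > (0 : ℝ), ∀ w : EuclideanSpace ℝ (Fin n), 0 < ‖w‖ → ‖w‖ ≤ 1 / 2 →
      ((n = 3 →
        (∫⁻ z in {z : EuclideanSpace ℝ (Fin n) | 2 * ‖w‖ ≤ ‖z‖ ∧ ‖z‖ ≤ K},
            ENNReal.ofReal (‖z‖ ^ ((2 : ℝ) - n) * ‖z + w‖ ^ ((1 : ℝ) - n)))
          ≤ ENNReal.ofReal (C * Real.log (1 / ‖w‖))) ∧
       (4 ≤ n →
        (∫⁻ z in {z : EuclideanSpace ℝ (Fin n) | 2 * ‖w‖ ≤ ‖z‖ ∧ ‖z‖ ≤ K},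
            ENNReal.ofReal (‖z‖ ^ ((2 : ℝ) - n) * ‖z + w‖ ^ ((1 : ℝ) - n)))
          ≤ ENNReal.ofReal (C * ‖w‖ ^ ((3 : ℝ) - n)))) :=
  stmt_5_general n hn K
end

section
/- Let n ≥ 3 and K > 0. There exists a constant C > 0, depending only on n and K, such that for every w ∈ ℝⁿ with 0 < ‖w‖ ≤ 1/2: ∫_{ {z ∈ ℝⁿ : ‖z‖ ≤ K} } ‖z‖^{2−n} ‖z + w‖^{1−n} dz ≤ C·log(1/‖w‖) if n = 3, and ≤ C·‖w‖^{3−n} if n ≥ 4. -/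
/-!
Split the ball `‖z‖ ≤ K` at the scale `ρ = ‖w‖ / 2`. Near `z = 0` the factor `‖z + w‖^{1-n}` is
at most `ρ^{1-n}`, near `z = -w` the factor `‖z‖^{2-n}` is at most `ρ^{2-n}`, and the remaining
integrals over balls of radius `ρ`, computed in polar coordinates, give `O(ρ^{3-n})`. Away from
both singularities `‖z + w‖ ≥ ‖z‖ / 3`, so the integrand is `O(‖z‖^{3-2n})`, whose integral over
`ρ < ‖z‖ ≤ K` is `O(ρ^{3-n})` for `n ≥ 4` and `O(log (K / ρ))` for `n = 3`.
-/

open MeasureTheory Set Metric Module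
open scoped ENNReal

lemma lintegral_Ioc_zero_rpow {t b : ℝ} (ht : -1 < t) (hb : 0 ≤ b) :
    ∫⁻ r in Ioc 0 b, ENNReal.ofReal (r ^ t) = ENNReal.ofReal (b ^ (t + 1) / (t + 1)) := by
  rw [← ofReal_integral_eq_lintegral_ofReal (intervalIntegral.intervalIntegrable_rpow' ht).1
      ((ae_restrict_iff' measurableSet_Ioc).2 (.of_forall fun r hr ↦ Real.rpow_nonneg hr.1.le t)),
    ← intervalIntegral.integral_of_le hb, integral_rpow (.inl ht),
    Real.zero_rpow (by linarith), sub_zero]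

lemma lintegral_Ioi_rpow {t a : ℝ} (ht : t < -1) (ha : 0 < a) :
    ∫⁻ r in Ioi a, ENNReal.ofReal (r ^ t) = ENNReal.ofReal (a ^ (t + 1) / -(t + 1)) := by
  rw [← ofReal_integral_eq_lintegral_ofReal (integrableOn_Ioi_rpow_of_lt ht ha)
      ((ae_restrict_iff' measurableSet_Ioi).2
        (.of_forall fun r hr ↦ Real.rpow_nonneg (ha.trans hr).le t)),
    integral_Ioi_rpow_of_lt ht ha, div_neg, neg_div]

lemma lintegral_Ioc_rpow_neg_one {a b : ℝ} (ha : 0 < a) (hab : a ≤ b) :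
    ∫⁻ r in Ioc a b, ENNReal.ofReal (r ^ (-1 : ℝ)) = ENNReal.ofReal (Real.log (b / a)) := by
  rw [setLIntegral_congr_fun measurableSet_Ioc fun r _ ↦ by rw [Real.rpow_neg_one],
    ← ofReal_integral_eq_lintegral_ofReal, ← intervalIntegral.integral_of_le hab,
    integral_inv_of_pos ha (ha.trans_le hab)]
  · exact (intervalIntegral.intervalIntegrable_inv
      (fun r hr ↦ (ha.trans_le (uIcc_of_le hab ▸ hr).1).ne') continuousOn_id).1
  · exact (ae_restrict_iff' measurableSet_Ioc).2
      (.of_forall fun r hr ↦ (inv_pos.2 (ha.trans hr.1)).le)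

lemma Real.log_max_div_half_le {K r : ℝ} (hr : 0 < r) (hr₂ : r ≤ 2) :
    Real.log (max K (r / 2) / (r / 2)) ≤ Real.log (max K 1) + Real.log 2 + Real.log (1 / r) := by
  calc Real.log (max K (r / 2) / (r / 2)) ≤ Real.log (max K 1 / (r / 2)) :=
        Real.log_le_log (by positivity) (by gcongr; linarith)
    _ = _ := by
        rw [Real.log_div (by positivity) (by positivity), Real.log_div hr.ne' two_ne_zero,
          one_div, Real.log_inv]
        ring

namespace MeasureTheory

lemma setLIntegral_ofReal_le_ofReal_mul {α : Type*} [MeasurableSpace α] {μ : Measure α}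
    {s : Set α} (hs : MeasurableSet s) {f g : α → ℝ} {c : ℝ} (hc : 0 ≤ c)
    (hfg : ∀ z ∈ s, f z ≤ c * g z) :
    ∫⁻ z in s, ENNReal.ofReal (f z) ∂μ ≤ ENNReal.ofReal c * ∫⁻ z in s, ENNReal.ofReal (g z) ∂μ := by
  rw [← lintegral_const_mul' _ _ ENNReal.ofReal_ne_top]
  refine setLIntegral_mono' hs fun z hz ↦ ?_
  rw [← ENNReal.ofReal_mul hc]
  exact ENNReal.ofReal_le_ofReal (hfg z hz)

variable {E : Type*} [NormedAddCommGroup E] [NormedSpace ℝ E] [MeasurableSpace E]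
  [FiniteDimensional ℝ E]

section Polar

variable (μ : Measure E) [μ.IsAddHaarMeasure]

lemma measureReal_ball_pos {r : ℝ} (hr : 0 < r) (x : E) : 0 < μ.real (ball x r) :=
  ENNReal.toReal_pos (measure_ball_pos μ x hr).ne' measure_ball_lt_top.ne

lemma finrank_mul_measure_ball_mul_ofReal (x : ℝ) :
    finrank ℝ E * μ (ball 0 1) * ENNReal.ofReal x =
      ENNReal.ofReal (finrank ℝ E * μ.real (ball 0 1) * x) := by
  rw [ENNReal.ofReal_mul (by positivity), ENNReal.ofReal_mul (by positivity),
    ENNReal.ofReal_natCast, ofReal_measureReal measure_ball_lt_top.ne]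

variable [BorelSpace E] [Nontrivial E]

theorem lintegral_fun_norm_addHaar {f : ℝ → ℝ≥0∞} (hf : Measurable f) :
    ∫⁻ x, f ‖x‖ ∂μ = finrank ℝ E * μ (ball 0 1) *
      ∫⁻ r in Ioi (0 : ℝ), ENNReal.ofReal (r ^ (finrank ℝ E - 1)) * f r := by
  calc ∫⁻ x, f ‖x‖ ∂μ = ∫⁻ x : ({(0)}ᶜ : Set E), f ‖x.1‖ ∂(μ.comap (↑)) := by
        rw [lintegral_subtype_comap (measurableSet_singleton _).compl fun x ↦ f ‖x‖,
          restrict_compl_singleton]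
    _ = ∫⁻ p, f p.2 ∂μ.toSphere.prod (.volumeIoiPow (finrank ℝ E - 1)) := by
        simpa using μ.measurePreserving_homeomorphUnitSphereProd.lintegral_comp_emb
          (Homeomorph.measurableEmbedding _) (f ∘ Subtype.val ∘ Prod.snd)
    _ = μ.toSphere univ * ∫⁻ r, f r ∂.volumeIoiPow (finrank ℝ E - 1) := by
        rw [lintegral_prod (μ := μ.toSphere) (ν := .volumeIoiPow (finrank ℝ E - 1))
          (fun p ↦ f p.2.1) (hf.comp (measurable_subtype_coe.comp measurable_snd)).aemeasurable]
        simp only [lintegral_const, mul_comm]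
    _ = _ := by
        rw [μ.toSphere_apply_univ, Measure.volumeIoiPow,
          lintegral_withDensity_eq_lintegral_mul _ (by fun_prop) (by fun_prop),
          ← lintegral_subtype_comap measurableSet_Ioi]
        rfl

theorem setLIntegral_norm_rpow_addHaar (s : ℝ) {S : Set ℝ} (hS : MeasurableSet S) :
    ∫⁻ x in {x | ‖x‖ ∈ S}, ENNReal.ofReal (‖x‖ ^ s) ∂μ = finrank ℝ E * μ (ball 0 1) *
      ∫⁻ r in S ∩ Ioi 0, ENNReal.ofReal (r ^ (finrank ℝ E - 1 + s)) := by
  have hd : 1 ≤ finrank ℝ E := finrank_pos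
  rw [← lintegral_indicator (show MeasurableSet {x : E | ‖x‖ ∈ S} from measurable_norm hS)]
  convert lintegral_fun_norm_addHaar μ ((measurable_id.pow_const s).ennreal_ofReal.indicator hS)
    using 2
  · ext x
    by_cases h : ‖x‖ ∈ S <;> simp [h]
  · rw [← setLIntegral_indicator hS]
    refine setLIntegral_congr_fun measurableSet_Ioi fun r hr ↦ ?_
    by_cases h : r ∈ S
    · rw [indicator_of_mem h, indicator_of_mem h,
        ← ENNReal.ofReal_mul (pow_nonneg hr.out.le _), id, ← Real.rpow_natCast,
        ← Real.rpow_add hr, Nat.cast_sub hd, Nat.cast_one]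
    · simp [h]

theorem setLIntegral_closedBall_norm_rpow {s ρ : ℝ} (hs : -(finrank ℝ E : ℝ) < s) (hρ : 0 ≤ ρ) :
    ∫⁻ x in closedBall 0 ρ, ENNReal.ofReal (‖x‖ ^ s) ∂μ =
      ENNReal.ofReal
        (finrank ℝ E * μ.real (ball 0 1) * (ρ ^ (finrank ℝ E + s) / (finrank ℝ E + s))) := by
  rw [show closedBall (0 : E) ρ = {x | ‖x‖ ∈ Iic ρ} by ext; simp,
    setLIntegral_norm_rpow_addHaar μ s measurableSet_Iic, Iic_inter_Ioi,
    lintegral_Ioc_zero_rpow (by linarith) hρ,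
    show (finrank ℝ E : ℝ) - 1 + s + 1 = finrank ℝ E + s by ring,
    finrank_mul_measure_ball_mul_ofReal]

theorem setLIntegral_norm_gt_rpow {s ρ : ℝ} (hs : (finrank ℝ E : ℝ) + s < 0) (hρ : 0 < ρ) :
    ∫⁻ x in {x | ρ < ‖x‖}, ENNReal.ofReal (‖x‖ ^ s) ∂μ =
      ENNReal.ofReal
        (finrank ℝ E * μ.real (ball 0 1) * (ρ ^ (finrank ℝ E + s) / -(finrank ℝ E + s))) := by
  rw [show {x : E | ρ < ‖x‖} = {x | ‖x‖ ∈ Ioi ρ} from rfl,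
    setLIntegral_norm_rpow_addHaar μ s measurableSet_Ioi, Ioi_inter_Ioi, max_eq_left hρ.le,
    lintegral_Ioi_rpow (by linarith) hρ,
    show (finrank ℝ E : ℝ) - 1 + s + 1 = finrank ℝ E + s by ring,
    finrank_mul_measure_ball_mul_ofReal]

theorem setLIntegral_annulus_norm_rpow_neg_finrank {a b : ℝ} (ha : 0 < a) (hab : a ≤ b) :
    ∫⁻ x in {x | a < ‖x‖ ∧ ‖x‖ ≤ b}, ENNReal.ofReal (‖x‖ ^ (-(finrank ℝ E : ℝ))) ∂μ =
      ENNReal.ofReal (finrank ℝ E * μ.real (ball 0 1) * Real.log (b / a)) := by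
  rw [show {x : E | a < ‖x‖ ∧ ‖x‖ ≤ b} = {x | ‖x‖ ∈ Ioc a b} from rfl,
    setLIntegral_norm_rpow_addHaar μ _ measurableSet_Ioc,
    inter_eq_left.2 (show Ioc a b ⊆ Ioi 0 from fun r hr ↦ ha.trans hr.1),
    show (finrank ℝ E : ℝ) - 1 + -finrank ℝ E = -1 by ring,
    lintegral_Ioc_rpow_neg_one ha hab, finrank_mul_measure_ball_mul_ofReal]

theorem setLIntegral_norm_rpow_neg_finrank_le_log {ρ : ℝ} (hρ : 0 < ρ) (K : ℝ) :
    ∫⁻ x in {x | ρ < ‖x‖ ∧ ‖x‖ ≤ K}, ENNReal.ofReal (‖x‖ ^ (-(finrank ℝ E : ℝ))) ∂μ ≤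
      ENNReal.ofReal (finrank ℝ E * μ.real (ball 0 1) * Real.log (max K ρ / ρ)) :=
  (lintegral_mono_set (t := {x | ρ < ‖x‖ ∧ ‖x‖ ≤ max K ρ})
    fun _ hx ↦ ⟨hx.1, hx.2.trans (le_max_left K ρ)⟩).trans_eq
    (setLIntegral_annulus_norm_rpow_neg_finrank μ hρ (le_max_right K ρ))

end Polar

variable [BorelSpace E] [Nontrivial E] {μ : Measure E} {w : E}

theorem setLIntegral_kernel_far_le (K : ℝ) :
    ∫⁻ z in {z | ‖w‖ / 2 < ‖z‖ ∧ ‖z‖ ≤ K} ∩ {z | ‖w‖ / 2 < ‖z + w‖},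
        ENNReal.ofReal (‖z‖ ^ (2 - finrank ℝ E : ℝ) * ‖z + w‖ ^ (1 - finrank ℝ E : ℝ)) ∂μ ≤
      ENNReal.ofReal (3 ^ (finrank ℝ E - 1 : ℝ)) *
        ∫⁻ z in {z | ‖w‖ / 2 < ‖z‖ ∧ ‖z‖ ≤ K},
          ENNReal.ofReal (‖z‖ ^ (3 - 2 * finrank ℝ E : ℝ)) ∂μ := by
  have hd : (1 : ℝ) ≤ finrank ℝ E := by exact_mod_cast finrank_pos
  have hS : MeasurableSet ({z | ‖w‖ / 2 < ‖z‖ ∧ ‖z‖ ≤ K} ∩ {z : E | ‖w‖ / 2 < ‖z + w‖}) :=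
    ((measurableSet_lt measurable_const measurable_norm).inter
      (measurableSet_le measurable_norm measurable_const)).inter
      (measurableSet_lt measurable_const (measurable_norm.comp (measurable_add_const w)))
  refine (setLIntegral_ofReal_le_ofReal_mul hS (c := 3 ^ (finrank ℝ E - 1 : ℝ)) (by positivity)
    fun z hz ↦ ?_).trans (by gcongr; exact inter_subset_left)
  obtain ⟨⟨hz : ‖w‖ / 2 < ‖z‖, -⟩, hzw : ‖w‖ / 2 < ‖z + w‖⟩ := hz
  have hz₀ : 0 < ‖z‖ := (by positivity : 0 ≤ ‖w‖ / 2).trans_lt hz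
  -- `‖z‖ ≤ ‖z + w‖ + ‖w‖ < 3 ‖z + w‖`
  have h3 : ‖z‖ / 3 ≤ ‖z + w‖ := by linarith [norm_le_add_norm_add z w]
  calc _ ≤ ‖z‖ ^ (2 - finrank ℝ E : ℝ) * (‖z‖ / 3) ^ (1 - finrank ℝ E : ℝ) :=
        mul_le_mul_of_nonneg_left
          (Real.rpow_le_rpow_of_nonpos (by positivity) h3 (by linarith)) (by positivity)
    _ = _ := by
        rw [Real.div_rpow hz₀.le (by norm_num), div_eq_mul_inv, ← Real.rpow_neg (by norm_num),
          neg_sub, show (3 - 2 * finrank ℝ E : ℝ) = 2 - finrank ℝ E + (1 - finrank ℝ E) by ring,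
          Real.rpow_add hz₀]
        ring

variable [μ.IsAddHaarMeasure]

theorem setLIntegral_kernel_near_zero_le (hd : 2 ≤ finrank ℝ E) (hw : w ≠ 0) :
    ∫⁻ z in closedBall 0 (‖w‖ / 2),
        ENNReal.ofReal (‖z‖ ^ (2 - finrank ℝ E : ℝ) * ‖z + w‖ ^ (1 - finrank ℝ E : ℝ)) ∂μ ≤
      ENNReal.ofReal
        (finrank ℝ E * μ.real (ball 0 1) * (‖w‖ / 2) ^ (3 - finrank ℝ E : ℝ) / 2) := by
  set ρ := ‖w‖ / 2 with hρ_def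
  have hρ : 0 < ρ := by positivity
  have hd' : (2 : ℝ) ≤ finrank ℝ E := by exact_mod_cast hd
  calc _ ≤ ENNReal.ofReal (ρ ^ (1 - finrank ℝ E : ℝ)) *
        ∫⁻ z in closedBall 0 ρ, ENNReal.ofReal (‖z‖ ^ (2 - finrank ℝ E : ℝ)) ∂μ := by
        refine setLIntegral_ofReal_le_ofReal_mul measurableSet_closedBall (by positivity)
          fun z hz ↦ ?_
        have hρz : ρ ≤ ‖z + w‖ := by
          linarith [mem_closedBall_zero_iff.1 hz, norm_le_add_norm_add' z w]
        rw [mul_comm (ρ ^ _)]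
        exact mul_le_mul_of_nonneg_left (Real.rpow_le_rpow_of_nonpos hρ hρz (by linarith))
          (by positivity)
    _ = _ := by
        rw [setLIntegral_closedBall_norm_rpow μ (by linarith) hρ.le,
          ← ENNReal.ofReal_mul (by positivity),
          show (finrank ℝ E : ℝ) + (2 - finrank ℝ E) = 2 by ring,
          show (3 - finrank ℝ E : ℝ) = 1 - finrank ℝ E + 2 by ring, Real.rpow_add hρ]
        ring_nf

theorem setLIntegral_kernel_near_neg_le (hd : 2 ≤ finrank ℝ E) (hw : w ≠ 0) :
    ∫⁻ z in (· + w) ⁻¹' closedBall 0 (‖w‖ / 2),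
        ENNReal.ofReal (‖z‖ ^ (2 - finrank ℝ E : ℝ) * ‖z + w‖ ^ (1 - finrank ℝ E : ℝ)) ∂μ ≤
      ENNReal.ofReal (finrank ℝ E * μ.real (ball 0 1) * (‖w‖ / 2) ^ (3 - finrank ℝ E : ℝ)) := by
  set ρ := ‖w‖ / 2 with hρ_def
  have hρ : 0 < ρ := by positivity
  have hd' : (2 : ℝ) ≤ finrank ℝ E := by exact_mod_cast hd
  calc _ ≤ ENNReal.ofReal (ρ ^ (2 - finrank ℝ E : ℝ)) *
        ∫⁻ z in (· + w) ⁻¹' closedBall 0 ρ,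
          ENNReal.ofReal (‖z + w‖ ^ (1 - finrank ℝ E : ℝ)) ∂μ := by
        refine setLIntegral_ofReal_le_ofReal_mul
          (measurableSet_closedBall.preimage (measurable_add_const w)) (by positivity)
          fun z hz ↦ ?_
        have hρz : ρ ≤ ‖z‖ := by
          linarith [mem_closedBall_zero_iff.1 hz, norm_le_add_norm_add' z w]
        exact mul_le_mul_of_nonneg_right (Real.rpow_le_rpow_of_nonpos hρ hρz (by linarith))
          (by positivity)
    _ = _ := by
        rw [(measurePreserving_add_right μ w).setLIntegral_comp_preimage_emb
            (MeasurableEquiv.addRight w).measurableEmbedding (fun z ↦ ENNReal.ofReal (‖z‖ ^ _)),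
          setLIntegral_closedBall_norm_rpow μ (by linarith) hρ.le,
          ← ENNReal.ofReal_mul (by positivity),
          show (finrank ℝ E : ℝ) + (1 - finrank ℝ E) = 1 by ring,
          show (3 - finrank ℝ E : ℝ) = 2 - finrank ℝ E + 1 by ring, Real.rpow_add hρ]
        ring_nf

theorem setLIntegral_kernel_le (hd : 2 ≤ finrank ℝ E) (hw : w ≠ 0) (K : ℝ) :
    ∫⁻ z in {z | ‖z‖ ≤ K},
        ENNReal.ofReal (‖z‖ ^ (2 - finrank ℝ E : ℝ) * ‖z + w‖ ^ (1 - finrank ℝ E : ℝ)) ∂μ ≤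
      ENNReal.ofReal
          (3 / 2 * finrank ℝ E * μ.real (ball 0 1) * (‖w‖ / 2) ^ (3 - finrank ℝ E : ℝ)) +
        ENNReal.ofReal (3 ^ (finrank ℝ E - 1 : ℝ)) *
          ∫⁻ z in {z | ‖w‖ / 2 < ‖z‖ ∧ ‖z‖ ≤ K},
            ENNReal.ofReal (‖z‖ ^ (3 - 2 * finrank ℝ E : ℝ)) ∂μ := by
  have hcover : {z | ‖z‖ ≤ K} ⊆ closedBall 0 (‖w‖ / 2) ∪ (· + w) ⁻¹' closedBall 0 (‖w‖ / 2) ∪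
      {z | ‖w‖ / 2 < ‖z‖ ∧ ‖z‖ ≤ K} ∩ {z | ‖w‖ / 2 < ‖z + w‖} := by
    intro z (hz : ‖z‖ ≤ K)
    by_cases h₀ : ‖z‖ ≤ ‖w‖ / 2
    · exact .inl (.inl (mem_closedBall_zero_iff.2 h₀))
    by_cases h₁ : ‖z + w‖ ≤ ‖w‖ / 2
    · exact .inl (.inr (mem_closedBall_zero_iff.2 h₁))
    exact .inr ⟨⟨lt_of_not_ge h₀, hz⟩, lt_of_not_ge h₁⟩
  refine (lintegral_mono_set hcover).trans <| (lintegral_union_le _ _ _).trans <|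
    (add_le_add_left (lintegral_union_le _ _ _) _).trans <|
    (add_le_add (add_le_add (setLIntegral_kernel_near_zero_le hd hw)
      (setLIntegral_kernel_near_neg_le hd hw)) (setLIntegral_kernel_far_le K)).trans_eq ?_
  rw [← ENNReal.ofReal_add (by positivity) (by positivity)]
  ring_nf

theorem exists_setLIntegral_kernel_le_rpow (hd : 4 ≤ finrank ℝ E) :
    ∃ C > 0, ∀ (K : ℝ) (w : E), w ≠ 0 →
      ∫⁻ z in {z | ‖z‖ ≤ K},
          ENNReal.ofReal (‖z‖ ^ (2 - finrank ℝ E : ℝ) * ‖z + w‖ ^ (1 - finrank ℝ E : ℝ)) ∂μ ≤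
        ENNReal.ofReal (C * ‖w‖ ^ (3 - finrank ℝ E : ℝ)) := by
  have hd3 : 0 < (finrank ℝ E : ℝ) - 3 := by
    have : (4 : ℝ) ≤ finrank ℝ E := by exact_mod_cast hd
    linarith
  have hV : 0 < μ.real (ball 0 1) := measureReal_ball_pos μ one_pos 0
  refine ⟨(3 / 2 * finrank ℝ E * μ.real (ball 0 1) + 3 ^ (finrank ℝ E - 1 : ℝ) *
      (finrank ℝ E * μ.real (ball 0 1) / (finrank ℝ E - 3))) * 2 ^ (finrank ℝ E - 3 : ℝ),
    by positivity, fun K w hw ↦ ?_⟩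
  have hρ : 0 < ‖w‖ / 2 := by positivity
  have hfar : ∫⁻ z in {z | ‖w‖ / 2 < ‖z‖ ∧ ‖z‖ ≤ K},
        ENNReal.ofReal (‖z‖ ^ (3 - 2 * finrank ℝ E : ℝ)) ∂μ ≤
      ENNReal.ofReal (finrank ℝ E * μ.real (ball 0 1) / (finrank ℝ E - 3) *
        (‖w‖ / 2) ^ (3 - finrank ℝ E : ℝ)) := by
    refine (lintegral_mono_set (t := {z | ‖w‖ / 2 < ‖z‖}) fun z hz ↦ hz.1).trans_eq ?_
    rw [setLIntegral_norm_gt_rpow μ (by linarith) hρ,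
      show (finrank ℝ E : ℝ) + (3 - 2 * finrank ℝ E) = 3 - finrank ℝ E by ring, neg_sub]
    ring_nf
  have hρw : (‖w‖ / 2) ^ (3 - finrank ℝ E : ℝ) =
      ‖w‖ ^ (3 - finrank ℝ E : ℝ) * 2 ^ (finrank ℝ E - 3 : ℝ) := by
    rw [Real.div_rpow (norm_nonneg w) zero_le_two, div_eq_mul_inv, ← Real.rpow_neg zero_le_two,
      neg_sub]
  refine (setLIntegral_kernel_le (by omega) hw K).trans <|
    (add_le_add_right (mul_le_mul_right hfar _) _).trans_eq ?_
  rw [← ENNReal.ofReal_mul (by positivity), ← ENNReal.ofReal_add (by positivity) (by positivity),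
    hρw]
  ring_nf

theorem exists_setLIntegral_kernel_le_log (hd : finrank ℝ E = 3) (K : ℝ) :
    ∃ C > 0, ∀ w : E, 0 < ‖w‖ → ‖w‖ ≤ 1 / 2 →
      ∫⁻ z in {z | ‖z‖ ≤ K},
          ENNReal.ofReal (‖z‖ ^ (2 - finrank ℝ E : ℝ) * ‖z + w‖ ^ (1 - finrank ℝ E : ℝ)) ∂μ ≤
        ENNReal.ofReal (C * Real.log (1 / ‖w‖)) := by
  have hd' : (finrank ℝ E : ℝ) = 3 := by exact_mod_cast hd
  set V := μ.real (ball 0 1) with hV_def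
  have hV : 0 < V := measureReal_ball_pos μ one_pos 0
  set m := Real.log (max K 1) with hm_def
  have hm : 0 ≤ m := Real.log_nonneg (le_max_right K 1)
  have hlog2 : 0 < Real.log 2 := Real.log_pos one_lt_two
  set A := 9 / 2 * V + 27 * V * (m + Real.log 2) with hA_def
  refine ⟨A / Real.log 2 + 27 * V, by positivity, fun w hw hw2 ↦ ?_⟩
  set L := Real.log (1 / ‖w‖) with hL_def
  have hL : Real.log 2 ≤ L :=
    Real.log_le_log two_pos (by rw [le_div_iff₀ hw]; linarith)
  have hL₀ : 0 ≤ L := hlog2.le.trans hL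
  set ρ := ‖w‖ / 2 with hρ_def
  have hlog : Real.log (max K ρ / ρ) ≤ m + Real.log 2 + L := by
    rw [hm_def, hL_def, hρ_def]
    exact Real.log_max_div_half_le hw (by linarith)
  have hfar : ∫⁻ z in {z | ρ < ‖z‖ ∧ ‖z‖ ≤ K},
        ENNReal.ofReal (‖z‖ ^ (3 - 2 * finrank ℝ E : ℝ)) ∂μ ≤
      ENNReal.ofReal (3 * V * (m + Real.log 2 + L)) := by
    rw [show (3 - 2 * finrank ℝ E : ℝ) = -finrank ℝ E by rw [hd']; norm_num]
    refine (setLIntegral_norm_rpow_neg_finrank_le_log μ (by positivity) K).trans ?_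
    rw [hd']
    gcongr
  refine (setLIntegral_kernel_le (by omega) (norm_pos_iff.1 hw) K).trans <|
    (add_le_add_right (mul_le_mul_right hfar _) _).trans ?_
  rw [hd', ← ENNReal.ofReal_mul (by positivity),
    ← ENNReal.ofReal_add (by positivity) (by positivity)]
  refine ENNReal.ofReal_le_ofReal ?_
  have hA : A ≤ A / Real.log 2 * L := by
    rw [div_mul_eq_mul_div, le_div_iff₀ hlog2]
    exact mul_le_mul_of_nonneg_left hL (by positivity)
  norm_num
  linarith [hV_def, hA_def]

end MeasureTheory

theorem stmt_6_general (n : ℕ) (hn : 3 ≤ n) (K : ℝ) :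
    ∃ C > (0 : ℝ), ∀ w : EuclideanSpace ℝ (Fin n), 0 < ‖w‖ → ‖w‖ ≤ 1 / 2 →
      ((n = 3 →
        (∫⁻ z in {z : EuclideanSpace ℝ (Fin n) | ‖z‖ ≤ K},
            ENNReal.ofReal (‖z‖ ^ ((2 : ℝ) - n) * ‖z + w‖ ^ ((1 : ℝ) - n)))
          ≤ ENNReal.ofReal (C * Real.log (1 / ‖w‖))) ∧
       (4 ≤ n →
        (∫⁻ z in {z : EuclideanSpace ℝ (Fin n) | ‖z‖ ≤ K},
            ENNReal.ofReal (‖z‖ ^ ((2 : ℝ) - n) * ‖z + w‖ ^ ((1 : ℝ) - n)))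
          ≤ ENNReal.ofReal (C * ‖w‖ ^ ((3 : ℝ) - n)))) := by
  have : NeZero n := ⟨by omega⟩
  rcases (by omega : n = 3 ∨ 4 ≤ n) with h3 | h4
  · obtain ⟨C, hC, hbound⟩ := exists_setLIntegral_kernel_le_log (μ := volume)
      (finrank_euclideanSpace_fin.trans h3) K
    refine ⟨C, hC, fun w hw hw2 ↦ ⟨fun _ ↦ ?_, fun h ↦ by omega⟩⟩
    simpa only [finrank_euclideanSpace_fin] using hbound w hw hw2
  · obtain ⟨C, hC, hbound⟩ := exists_setLIntegral_kernel_le_rpow (μ := volume)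
      (E := EuclideanSpace ℝ (Fin n)) (by rwa [finrank_euclideanSpace_fin])
    refine ⟨C, hC, fun w hw _ ↦ ⟨fun h ↦ by omega, fun _ ↦ ?_⟩⟩
    simpa only [finrank_euclideanSpace_fin] using hbound K w (norm_pos_iff.1 hw)

/-- Full convolution estimate: for `n ≥ 3` and `K > 0` there is `C > 0`
(depending only on `n` and `K`) such that for all `w` with `0 < ‖w‖ ≤ 1/2`,
`∫_{‖z‖ ≤ K} ‖z‖^{2−n} ‖z+w‖^{1−n} dz ≤ C log(1/‖w‖)` if `n = 3`, and
`≤ C ‖w‖^{3−n}` if `n ≥ 4`. -/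
theorem stmt_6 (n : ℕ) (hn : 3 ≤ n) (K : ℝ) (hK : 0 < K) :
    ∃ C > (0 : ℝ), ∀ w : EuclideanSpace ℝ (Fin n), 0 < ‖w‖ → ‖w‖ ≤ 1 / 2 →
      ((n = 3 →
        (∫⁻ z in {z : EuclideanSpace ℝ (Fin n) | ‖z‖ ≤ K},
            ENNReal.ofReal (‖z‖ ^ ((2 : ℝ) - n) * ‖z + w‖ ^ ((1 : ℝ) - n)))
          ≤ ENNReal.ofReal (C * Real.log (1 / ‖w‖))) ∧
       (4 ≤ n →
        (∫⁻ z in {z : EuclideanSpace ℝ (Fin n) | ‖z‖ ≤ K},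
            ENNReal.ofReal (‖z‖ ^ ((2 : ℝ) - n) * ‖z + w‖ ^ ((1 : ℝ) - n)))
          ≤ ENNReal.ofReal (C * ‖w‖ ^ ((3 : ℝ) - n)))) :=
  stmt_6_general n hn K
end

section
/- Let n ≥ 3 and let Ω ⊆ ℝⁿ be a bounded open set. Let A : Ω → ℂⁿ and q̃ : Ω → ℂ be bounded measurable functions, and let C₀ > 0. Suppose G : Ω × Ω → ℂ and H : Ω × Ω → ℂⁿ are measurable functions such that |G(z,y)| ≤ C₀‖z−y‖^{2−n} and ‖H(z,y)‖ ≤ C₀‖z−y‖^{1−n} for all z ≠ y in Ω, and that the integral equation G(x,y) = G₀(x,y) + ∫_Ω G₀(x,z)·( 2i A(z)·H(z,y) − q̃(z)·G(z,y) ) dz holds for all x ≠ y in Ω. Then there exists a constant C > 0 such that for all x, y ∈ Ω with 0 < ‖x−y‖ ≤ 1/2: |G(x,y) − G₀(x,y)| ≤ C·log(1/‖x−y‖) if n = 3, and |G(x,y) − G₀(x,y)| ≤ C·‖x−y‖^{3−n} if n ≥ 4. -/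
/-!
Subtracting `G₀` from the integral equation leaves `∫_Ω G₀(x,z) (2i A·H − q̃ G)(z,y) dz`. By
Cauchy–Schwarz for `A·H`, and `‖z − y‖ ≤ diam Ω` to trade the `G` term for an `H`-type term, its
integrand is `O(‖x − z‖^{2−n} ‖z − y‖^{1−n})`. With `r = ‖x − y‖`, this composition of Riesz
kernels is `O(r^{3−n})` on the balls of radius `r / 2` about `x` and `y`; elsewhere
`‖z − y‖ ≥ ‖z − x‖ / 3`, and polar coordinates about `x` reduce it to `∫_{r/2}^{D} t^{2−n} dt`,
which is `log (2D / r)` for `n = 3` and `O(r^{3−n})` for `n ≥ 4`.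
-/

open MeasureTheory
open scoped BigOperators

/-- The standard fundamental solution of `−Δ` in `ℝⁿ`, `n ≥ 3`:
`G₀(x,y) = 1 / ((n−2) Υ_n ‖x−y‖^{n−2})` with `Υ_n = 2 π^{n/2} / Γ(n/2)`. -/
noncomputable def fundamentalSolutionLaplace (n : ℕ)
    (x y : EuclideanSpace ℝ (Fin n)) : ℝ :=
  1 / (((n : ℝ) - 2) * (2 * Real.pi ^ ((n : ℝ) / 2) / Real.Gamma ((n : ℝ) / 2))
        * ‖x - y‖ ^ ((n : ℝ) - 2))

open Metric Set ENNReal Module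

theorem rpow_mul_rpow_le_of_half_lt_norm_sub {E : Type*} [NormedAddCommGroup E] {x y z : E}
    {a b : ℝ} (hb : b ≤ 0) (hx : 0 < ‖z - x‖) (hy : ‖x - y‖ / 2 < ‖z - y‖) :
    ‖z - x‖ ^ a * ‖z - y‖ ^ b ≤ 3 ^ (-b) * ‖z - x‖ ^ (a + b) := by
  have h3 : ‖z - x‖ / 3 ≤ ‖z - y‖ := by
    have := norm_sub_le_norm_sub_add_norm_sub z y x
    rw [norm_sub_rev y x] at this
    linarith
  calc ‖z - x‖ ^ a * ‖z - y‖ ^ b ≤ ‖z - x‖ ^ a * (‖z - x‖ / 3) ^ b := by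
        gcongr ‖z - x‖ ^ a * ?_
        exact Real.rpow_le_rpow_of_nonpos (by positivity) h3 hb
    _ = 3 ^ (-b) * ‖z - x‖ ^ (a + b) := by
        rw [Real.div_rpow hx.le (by norm_num), Real.rpow_add hx, Real.rpow_neg (by norm_num)]
        ring

section Polar

variable {E : Type*} [NormedAddCommGroup E] [NormedSpace ℝ E] [FiniteDimensional ℝ E]
  [MeasurableSpace E] [BorelSpace E] [Nontrivial E] (μ : Measure E) [μ.IsAddHaarMeasure]

theorem lintegral_fun_norm_addHaar (f : ℝ → ℝ≥0∞) (hf : Measurable f) :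
    ∫⁻ x, f ‖x‖ ∂μ =
      finrank ℝ E * μ (ball 0 1) *
        ∫⁻ y in Ioi (0 : ℝ), ENNReal.ofReal (y ^ (finrank ℝ E - 1)) * f y := by
  calc ∫⁻ x, f ‖x‖ ∂μ = ∫⁻ x : ({(0)}ᶜ : Set E), f ‖x.1‖ ∂(μ.comap (↑)) := by
        rw [lintegral_subtype_comap (measurableSet_singleton _).compl (fun x => f ‖x‖),
          restrict_compl_singleton]
    _ = ∫⁻ x, f x.2 ∂μ.toSphere.prod (.volumeIoiPow (finrank ℝ E - 1)) := by
        simpa using (μ.measurePreserving_homeomorphUnitSphereProd.lintegral_comp_emb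
          (Homeomorph.measurableEmbedding _) (f ∘ Subtype.val ∘ Prod.snd))
    _ = μ.toSphere univ * ∫⁻ x : Ioi (0 : ℝ), f x ∂.volumeIoiPow (finrank ℝ E - 1) := by
        rw [lintegral_prod (fun x : sphere (0 : E) 1 × Ioi (0 : ℝ) => f x.2)
          (hf.comp (measurable_subtype_coe.comp measurable_snd)).aemeasurable]
        simp only [lintegral_const, mul_comm]
    _ = _ := by
        rw [Measure.volumeIoiPow,
          lintegral_withDensity_eq_lintegral_mul _ (by fun_prop) (by fun_prop),
          μ.toSphere_apply_univ, ← lintegral_subtype_comap measurableSet_Ioi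
            (fun y => ENNReal.ofReal (y ^ (finrank ℝ E - 1)) * f y)]
        rfl

theorem setLIntegral_preimage_norm_sub (c : E) {I : Set ℝ} (hI : MeasurableSet I) (f : ℝ → ℝ≥0∞)
    (hf : Measurable f) :
    ∫⁻ x in (‖· - c‖) ⁻¹' I, f ‖x - c‖ ∂μ =
      finrank ℝ E * μ (ball 0 1) *
        ∫⁻ y in I ∩ Ioi 0, ENNReal.ofReal (y ^ (finrank ℝ E - 1)) * f y := by
  have hmeas : Measurable (‖· - c‖ : E → ℝ) := (measurable_id.sub_const c).norm
  have hind : ((‖· - c‖) ⁻¹' I).indicator (fun x => f ‖x - c‖) =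
      fun x => I.indicator f ‖x - c‖ := by
    ext x; by_cases h : ‖x - c‖ ∈ I <;> simp [h]
  rw [← lintegral_indicator (hmeas hI), hind,
    lintegral_sub_right_eq_self (fun x => I.indicator f ‖x‖) c,
    lintegral_fun_norm_addHaar μ _ (hf.indicator hI), ← Measure.restrict_restrict hI,
    ← lintegral_indicator hI]
  congr 2 with y
  simp only [indicator]
  split_ifs <;> simp

theorem lintegral_Ioc_pow_mul_rpow {d : ℕ} (hd : 1 ≤ d) {s t b : ℝ} (hs : 0 ≤ s) (hst : s ≤ t)
    (hint : IntervalIntegrable (fun y => y ^ ((d : ℝ) - 1 + b)) volume s t) :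
    ∫⁻ y in Ioc s t, ENNReal.ofReal (y ^ (d - 1)) * ENNReal.ofReal (y ^ b) =
      ENNReal.ofReal (∫ y in s..t, y ^ ((d : ℝ) - 1 + b)) := by
  rw [intervalIntegral.integral_of_le hst, ofReal_integral_eq_lintegral_ofReal hint.1]
  · refine setLIntegral_congr_fun measurableSet_Ioc fun y hy => ?_
    have hy0 : 0 < y := hs.trans_lt hy.1
    rw [← ENNReal.ofReal_mul (by positivity), ← Real.rpow_natCast, Real.rpow_add hy0,
      Nat.cast_sub hd, Nat.cast_one]
  · filter_upwards [ae_restrict_mem measurableSet_Ioc] with y hy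
    exact Real.rpow_nonneg (hs.trans hy.1.le) _

theorem setLIntegral_closedBall_norm_sub_rpow (c : E) {a ρ : ℝ} (ha : -(finrank ℝ E : ℝ) < a)
    (hρ : 0 ≤ ρ) :
    ∫⁻ x in closedBall c ρ, ENNReal.ofReal (‖x - c‖ ^ a) ∂μ =
      finrank ℝ E * μ (ball 0 1) * ENNReal.ofReal (ρ ^ (finrank ℝ E + a) / (finrank ℝ E + a)) := by
  have hball : closedBall c ρ = (‖· - c‖) ⁻¹' Iic ρ := by ext x; simp [dist_eq_norm]
  have hb : -1 < (finrank ℝ E : ℝ) - 1 + a := by linarith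
  rw [hball, setLIntegral_preimage_norm_sub μ c measurableSet_Iic (fun y => ENNReal.ofReal (y ^ a))
      (by fun_prop),
    Iic_inter_Ioi, lintegral_Ioc_pow_mul_rpow finrank_pos le_rfl hρ
      (intervalIntegral.intervalIntegrable_rpow' hb),
    integral_rpow (Or.inl hb), Real.zero_rpow (by linarith)]
  ring_nf

theorem setLIntegral_annulus_norm_sub_rpow (c : E) (a : ℝ) {s t : ℝ} (hs : 0 < s) (hst : s ≤ t) :
    ∫⁻ x in (‖· - c‖) ⁻¹' Ioc s t, ENNReal.ofReal (‖x - c‖ ^ a) ∂μ =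
      finrank ℝ E * μ (ball 0 1) *
        ENNReal.ofReal (∫ y in s..t, y ^ ((finrank ℝ E : ℝ) - 1 + a)) := by
  rw [setLIntegral_preimage_norm_sub μ c measurableSet_Ioc (fun y => ENNReal.ofReal (y ^ a))
      (by fun_prop),
    inter_eq_left.mpr (Ioc_subset_Ioi_self.trans (Ioi_subset_Ioi hs.le)),
    lintegral_Ioc_pow_mul_rpow finrank_pos hs.le hst
      (intervalIntegral.intervalIntegrable_rpow (Or.inr ?_))]
  rw [uIcc_of_le hst]
  exact fun h => hs.not_ge h.1

theorem setLIntegral_closedBall_rpow_mul_rpow_le {p q : E} (hpq : p ≠ q) {a b : ℝ}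
    (ha : -(finrank ℝ E : ℝ) < a) (hb : b ≤ 0) :
    ∫⁻ z in closedBall p (‖p - q‖ / 2), ENNReal.ofReal (‖z - p‖ ^ a * ‖z - q‖ ^ b) ∂μ ≤
      finrank ℝ E * μ (ball 0 1) *
        ENNReal.ofReal ((‖p - q‖ / 2) ^ (finrank ℝ E + a + b) / (finrank ℝ E + a)) := by
  set ρ := ‖p - q‖ / 2 with hρ_def
  have hρ : 0 < ρ := by have := norm_sub_pos_iff.mpr hpq; positivity
  have hfar : ∀ z ∈ closedBall p ρ, ‖z - q‖ ^ b ≤ ρ ^ b := fun z hz => by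
    refine Real.rpow_le_rpow_of_nonpos hρ ?_ hb
    have := norm_sub_le_norm_sub_add_norm_sub p z q
    rw [mem_closedBall, dist_eq_norm] at hz
    rw [norm_sub_rev p z] at this
    linarith
  calc ∫⁻ z in closedBall p ρ, ENNReal.ofReal (‖z - p‖ ^ a * ‖z - q‖ ^ b) ∂μ
      ≤ ∫⁻ z in closedBall p ρ, ENNReal.ofReal (‖z - p‖ ^ a) * ENNReal.ofReal (ρ ^ b) ∂μ := by
        refine setLIntegral_mono' measurableSet_closedBall fun z hz => ?_
        rw [← ENNReal.ofReal_mul (by positivity)]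
        exact ENNReal.ofReal_le_ofReal (mul_le_mul_of_nonneg_left (hfar z hz) (by positivity))
    _ = finrank ℝ E * μ (ball 0 1) *
          ENNReal.ofReal (ρ ^ (finrank ℝ E + a) / (finrank ℝ E + a) * ρ ^ b) := by
        have : 0 < (finrank ℝ E : ℝ) + a := by linarith
        rw [lintegral_mul_const' _ _ ofReal_ne_top,
          setLIntegral_closedBall_norm_sub_rpow μ p ha hρ.le, mul_assoc,
          ← ENNReal.ofReal_mul (by positivity)]
    _ = _ := by rw [div_mul_eq_mul_div, ← Real.rpow_add hρ]

theorem setLIntegral_far_rpow_mul_rpow_le (x y : E) {a b : ℝ} (hb : b ≤ 0) {D : ℝ}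
    (hρ : 0 < ‖x - y‖ / 2) (hD : ‖x - y‖ / 2 ≤ D) :
    ∫⁻ z in (‖· - x‖) ⁻¹' Ioc (‖x - y‖ / 2) D \ closedBall y (‖x - y‖ / 2),
        ENNReal.ofReal (‖z - x‖ ^ a * ‖z - y‖ ^ b) ∂μ ≤
      ENNReal.ofReal (3 ^ (-b)) * (finrank ℝ E * μ (ball 0 1) *
        ENNReal.ofReal (∫ t in ‖x - y‖ / 2..D, t ^ ((finrank ℝ E : ℝ) - 1 + (a + b)))) := by
  set ρ := ‖x - y‖ / 2
  have hS : MeasurableSet ((‖· - x‖) ⁻¹' Ioc ρ D \ closedBall y ρ) :=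
    ((measurable_id.sub_const x).norm measurableSet_Ioc).diff measurableSet_closedBall
  calc _ ≤ ∫⁻ z in (‖· - x‖) ⁻¹' Ioc ρ D \ closedBall y ρ,
          ENNReal.ofReal (3 ^ (-b)) * ENNReal.ofReal (‖z - x‖ ^ (a + b)) ∂μ := by
        refine setLIntegral_mono' hS fun z hz => ?_
        rw [← ENNReal.ofReal_mul (by positivity)]
        have hzy : ρ < ‖z - y‖ := by simpa [dist_eq_norm] using hz.2
        exact ENNReal.ofReal_le_ofReal
          (rpow_mul_rpow_le_of_half_lt_norm_sub hb (hρ.trans hz.1.1) hzy)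
    _ ≤ ENNReal.ofReal (3 ^ (-b)) *
          ∫⁻ z in (‖· - x‖) ⁻¹' Ioc ρ D, ENNReal.ofReal (‖z - x‖ ^ (a + b)) ∂μ := by
        rw [lintegral_const_mul' _ _ ofReal_ne_top]
        gcongr
        exact sdiff_subset
    _ = _ := by rw [setLIntegral_annulus_norm_sub_rpow μ x _ hρ hD]

end Polar

/-- The two balls of radius `r / 2` about the poles contribute at most `(r / 2) ^ (3 - n)` each;
on the rest `‖z - y‖ ≥ ‖z - x‖ / 3`, which leaves a radial integral about `x`. -/
noncomputable def kernelMajorant (n : ℕ) (D r : ℝ) : ℝ :=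
  2 * (r / 2) ^ ((3 : ℝ) - n) + 3 ^ ((n : ℝ) - 1) * ∫ t in r / 2..D, t ^ ((2 : ℝ) - n)

theorem lintegral_riesz_kernel_le {E : Type*} [NormedAddCommGroup E] [NormedSpace ℝ E]
    [FiniteDimensional ℝ E] [MeasurableSpace E] [BorelSpace E] (μ : Measure E) [μ.IsAddHaarMeasure]
    {n : ℕ} (hE : finrank ℝ E = n) (hn : 2 ≤ n) {x y : E}
    (hxy : x ≠ y) {D : ℝ} (hD : ‖x - y‖ / 2 ≤ D) :
    ∫⁻ z in ball x D, ENNReal.ofReal (‖x - z‖ ^ ((2 : ℝ) - n) * ‖z - y‖ ^ ((1 : ℝ) - n)) ∂μ ≤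
      n * μ (ball 0 1) * ENNReal.ofReal (kernelMajorant n D ‖x - y‖) := by
  subst hE
  have : Nontrivial E := Module.nontrivial_of_finrank_pos (R := ℝ) (by omega)
  have hd : (2 : ℝ) ≤ finrank ℝ E := by exact_mod_cast hn
  set d : ℝ := (finrank ℝ E : ℝ)
  set ρ := ‖x - y‖ / 2
  have hρ : 0 < ρ := by have := norm_sub_pos_iff.mpr hxy; positivity
  set S := (‖· - x‖) ⁻¹' Ioc ρ D \ closedBall y ρ
  have hcover : ball x D ⊆ closedBall x ρ ∪ closedBall y ρ ∪ S := fun z hz => by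
    by_cases hzx : z ∈ closedBall x ρ
    · exact Or.inl (Or.inl hzx)
    by_cases hzy : z ∈ closedBall y ρ
    · exact Or.inl (Or.inr hzy)
    simp only [mem_closedBall, dist_eq_norm, not_le, mem_ball] at hzx hz
    exact Or.inr ⟨⟨hzx, hz.le⟩, hzy⟩
  have hpole_x := setLIntegral_closedBall_rpow_mul_rpow_le μ hxy
    (a := 2 - d) (b := 1 - d) (by linarith) (by linarith)
  rw [show d + (2 - d) + (1 - d) = 3 - d by ring, show d + (2 - d) = 2 by ring] at hpole_x
  have hpole_y := setLIntegral_closedBall_rpow_mul_rpow_le μ hxy.symm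
    (a := 1 - d) (b := 2 - d) (by linarith) (by linarith)
  rw [show d + (1 - d) + (2 - d) = 3 - d by ring, show d + (1 - d) = 1 by ring, div_one,
    norm_sub_rev y x] at hpole_y
  simp_rw [mul_comm (‖_ - y‖ ^ (1 - d))] at hpole_y
  have hfar := setLIntegral_far_rpow_mul_rpow_le μ x y (a := 2 - d) (b := 1 - d)
    (by linarith) hρ hD
  rw [neg_sub, show d - 1 + (2 - d + (1 - d)) = 2 - d by ring] at hfar
  set κ := (finrank ℝ E : ℝ≥0∞) * μ (ball 0 1)
  have hI : 0 ≤ ∫ t in ρ..D, t ^ (2 - d) :=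
    intervalIntegral.integral_nonneg hD fun t ht => Real.rpow_nonneg (hρ.le.trans ht.1) _
  calc ∫⁻ z in ball x D, ENNReal.ofReal (‖x - z‖ ^ (2 - d) * ‖z - y‖ ^ (1 - d)) ∂μ
      = ∫⁻ z in ball x D, ENNReal.ofReal (‖z - x‖ ^ (2 - d) * ‖z - y‖ ^ (1 - d)) ∂μ := by
        simp_rw [norm_sub_rev x]
    _ ≤ (∫⁻ z in closedBall x ρ, ENNReal.ofReal (‖z - x‖ ^ (2 - d) * ‖z - y‖ ^ (1 - d)) ∂μ) +
          (∫⁻ z in closedBall y ρ, ENNReal.ofReal (‖z - x‖ ^ (2 - d) * ‖z - y‖ ^ (1 - d)) ∂μ) +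
          ∫⁻ z in S, ENNReal.ofReal (‖z - x‖ ^ (2 - d) * ‖z - y‖ ^ (1 - d)) ∂μ :=
        (lintegral_mono_set hcover).trans
          ((lintegral_union_le _ _ _).trans (add_le_add_left (lintegral_union_le _ _ _) _))
    _ ≤ κ * ENNReal.ofReal (ρ ^ (3 - d) / 2) + κ * ENNReal.ofReal (ρ ^ (3 - d)) +
          ENNReal.ofReal (3 ^ (d - 1)) * (κ * ENNReal.ofReal (∫ t in ρ..D, t ^ (2 - d))) := by
        gcongr
    _ = κ * ENNReal.ofReal (ρ ^ (3 - d) / 2 + ρ ^ (3 - d) +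
          3 ^ (d - 1) * ∫ t in ρ..D, t ^ (2 - d)) := by
        rw [mul_left_comm (ENNReal.ofReal _), ← mul_add, ← mul_add,
          ← ENNReal.ofReal_mul (by positivity),
          ← ENNReal.ofReal_add (by positivity) (by positivity),
          ← ENNReal.ofReal_add (by positivity) (by positivity)]
    _ ≤ κ * ENNReal.ofReal (kernelMajorant (finrank ℝ E) D ‖x - y‖) := by
        gcongr
        have : 0 ≤ ρ ^ (3 - d) := by positivity
        rw [kernelMajorant]
        linarith

theorem intervalIntegral_rpow_le_of_lt_neg_one {b s t : ℝ} (hb : b < -1) (hs : 0 < s)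
    (hst : s ≤ t) :
    ∫ y in s..t, y ^ b ≤ s ^ (b + 1) / (-b - 1) := by
  have h0 : (0 : ℝ) ∉ uIcc s t := by rw [uIcc_of_le hst]; exact fun h => hs.not_ge h.1
  rw [integral_rpow (Or.inr ⟨hb.ne, h0⟩), ← neg_div_neg_eq, neg_sub, neg_add']
  exact div_le_div_of_nonneg_right (sub_le_self _ (Real.rpow_nonneg (hs.le.trans hst) _))
    (by linarith)

theorem kernelMajorant_three_le {D r : ℝ} (hD : 1 ≤ D) (hr : 0 < r) (hr2 : r ≤ 1 / 2) :
    kernelMajorant 3 D r ≤ ((2 + 9 * Real.log (2 * D)) / Real.log 2 + 9) * Real.log (1 / r) := by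
  have hlog2 : 0 < Real.log 2 := Real.log_pos one_lt_two
  have hL : 1 ≤ Real.log (1 / r) / Real.log 2 := by
    rw [one_le_div hlog2]
    exact Real.log_le_log two_pos (by rw [le_div_iff₀ hr]; linarith)
  have hint : ∫ t in r / 2..D, t ^ ((2 : ℝ) - 3) = Real.log (2 * D) + Real.log (1 / r) := by
    rw [show (2 : ℝ) - 3 = -1 by norm_num]
    simp only [Real.rpow_neg_one]
    rw [integral_inv_of_pos (by positivity) (by positivity),
      ← Real.log_mul (by positivity) (by positivity)]
    congr 1; field_simp
  have h2D : 0 ≤ Real.log (2 * D) := Real.log_nonneg (by linarith)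
  calc kernelMajorant 3 D r = (2 + 9 * Real.log (2 * D)) * 1 + 9 * Real.log (1 / r) := by
        rw [kernelMajorant, Nat.cast_ofNat, hint, show (3 : ℝ) - 3 = 0 by norm_num,
          show (3 : ℝ) - 1 = 2 by norm_num, Real.rpow_zero]
        ring
    _ ≤ (2 + 9 * Real.log (2 * D)) * (Real.log (1 / r) / Real.log 2) + 9 * Real.log (1 / r) := by
        gcongr
    _ = _ := by ring

theorem kernelMajorant_le_of_four_le {n : ℕ} (hn : 4 ≤ n) {D r : ℝ} (hr : 0 < r)
    (hrD : r / 2 ≤ D) :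
    kernelMajorant n D r ≤ (2 + 3 ^ ((n : ℝ) - 1)) * 2 ^ ((n : ℝ) - 3) * r ^ ((3 : ℝ) - n) := by
  have hn' : (4 : ℝ) ≤ n := by exact_mod_cast hn
  have hint : ∫ t in r / 2..D, t ^ ((2 : ℝ) - n) ≤ (r / 2) ^ ((3 : ℝ) - n) := by
    refine (intervalIntegral_rpow_le_of_lt_neg_one (by linarith) (by positivity) hrD).trans ?_
    rw [show (2 : ℝ) - n + 1 = 3 - n by ring]
    exact div_le_self (by positivity) (by linarith)
  have hhalf : (r / 2) ^ ((3 : ℝ) - n) = 2 ^ ((n : ℝ) - 3) * r ^ ((3 : ℝ) - n) := by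
    rw [Real.div_rpow hr.le two_pos.le, div_eq_mul_inv, ← Real.rpow_neg two_pos.le, neg_sub,
      mul_comm]
  calc kernelMajorant n D r
      ≤ 2 * (r / 2) ^ ((3 : ℝ) - n) + 3 ^ ((n : ℝ) - 1) * (r / 2) ^ ((3 : ℝ) - n) := by
        rw [kernelMajorant]; gcongr
    _ = _ := by rw [hhalf]; ring

noncomputable def remainderRate (n : ℕ) (r : ℝ) : ℝ :=
  if n = 3 then Real.log (1 / r) else r ^ ((3 : ℝ) - n)

theorem remainderRate_nonneg (n : ℕ) {r : ℝ} (hr : 0 < r) (hr1 : r ≤ 1) :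
    0 ≤ remainderRate n r := by
  unfold remainderRate
  split_ifs
  · exact Real.log_nonneg (by rw [le_div_iff₀ hr]; linarith)
  · positivity

theorem exists_kernelMajorant_le_remainderRate {n : ℕ} (hn : 3 ≤ n) {D : ℝ} (hD : 1 ≤ D) :
    ∃ K, 0 ≤ K ∧ ∀ r, 0 < r → r ≤ 1 / 2 → kernelMajorant n D r ≤ K * remainderRate n r := by
  rcases hn.eq_or_lt with rfl | hn4
  · have h2D : 0 ≤ Real.log (2 * D) := Real.log_nonneg (by linarith)
    refine ⟨(2 + 9 * Real.log (2 * D)) / Real.log 2 + 9, by positivity, fun r hr hr2 => ?_⟩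
    simpa [remainderRate] using kernelMajorant_three_le hD hr hr2
  · refine ⟨(2 + 3 ^ ((n : ℝ) - 1)) * 2 ^ ((n : ℝ) - 3), by positivity, fun r hr hr2 => ?_⟩
    rw [remainderRate, if_neg hn4.ne']
    exact kernelMajorant_le_of_four_le hn4 hr (by linarith)

theorem lintegral_riesz_kernel_le_remainderRate {E : Type*} [NormedAddCommGroup E]
    [NormedSpace ℝ E] [FiniteDimensional ℝ E] [MeasurableSpace E] [BorelSpace E]
    (μ : Measure E) [μ.IsAddHaarMeasure] {n : ℕ} (hE : finrank ℝ E = n) (hn : 3 ≤ n)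
    {D : ℝ} (hD : 1 ≤ D) :
    ∃ K, 0 ≤ K ∧ ∀ x y : E, 0 < ‖x - y‖ → ‖x - y‖ ≤ 1 / 2 →
      ∫⁻ z in ball x D, ENNReal.ofReal (‖x - z‖ ^ ((2 : ℝ) - n) * ‖z - y‖ ^ ((1 : ℝ) - n)) ∂μ ≤
        ENNReal.ofReal (K * remainderRate n ‖x - y‖) := by
  obtain ⟨K, hK0, hK⟩ := exists_kernelMajorant_le_remainderRate hn hD
  refine ⟨(n * μ (ball 0 1)).toReal * K, by positivity, fun x y hr hr2 => ?_⟩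
  have hfin : (n : ℝ≥0∞) * μ (ball 0 1) ≠ ⊤ := mul_ne_top (natCast_ne_top n) measure_ball_lt_top.ne
  calc _ ≤ n * μ (ball 0 1) * ENNReal.ofReal (kernelMajorant n D ‖x - y‖) :=
        lintegral_riesz_kernel_le μ hE (by omega) (norm_sub_pos_iff.mp hr) (by linarith)
    _ ≤ n * μ (ball 0 1) * ENNReal.ofReal (K * remainderRate n ‖x - y‖) := by
        gcongr
        exact hK _ hr hr2
    _ = _ := by
        rw [mul_assoc _ K, ENNReal.ofReal_mul ENNReal.toReal_nonneg, ofReal_toReal hfin]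

theorem norm_sum_mul_le {𝕜 ι : Type*} [RCLike 𝕜] [Fintype ι] (a b : EuclideanSpace 𝕜 ι) :
    ‖∑ i, a i * b i‖ ≤ ‖a‖ * ‖b‖ := by
  rw [EuclideanSpace.norm_eq, EuclideanSpace.norm_eq]
  refine (norm_sum_le _ _).trans ?_
  simpa only [norm_mul] using Real.sum_mul_le_sqrt_mul_sqrt Finset.univ (‖a ·‖) (‖b ·‖)

theorem norm_setIntegral_le_of_ae_norm_le_mul {α F : Type*} [MeasurableSpace α]
    [NormedAddCommGroup F] [NormedSpace ℝ F] {μ : Measure α} {s t : Set α} (hst : s ⊆ t)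
    {f : α → F} {g : α → ℝ} {B R : ℝ} (hB : 0 ≤ B) (hR : 0 ≤ R)
    (hfg : ∀ᵐ z ∂μ.restrict s, ‖f z‖ ≤ B * g z)
    (hg : ∫⁻ z in t, ENNReal.ofReal (g z) ∂μ ≤ ENNReal.ofReal R) :
    ‖∫ z in s, f z ∂μ‖ ≤ B * R := by
  refine (norm_integral_le_lintegral_norm f).trans (toReal_le_of_le_ofReal (by positivity) ?_)
  calc ∫⁻ z in s, ENNReal.ofReal ‖f z‖ ∂μ ≤ ∫⁻ z in s, ENNReal.ofReal B * ENNReal.ofReal (g z) ∂μ :=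
        lintegral_mono_ae <| hfg.mono fun z hz => by
          rw [← ENNReal.ofReal_mul hB]; exact ENNReal.ofReal_le_ofReal hz
    _ ≤ ENNReal.ofReal B * ∫⁻ z in t, ENNReal.ofReal (g z) ∂μ := by
        rw [lintegral_const_mul' _ _ ofReal_ne_top]
        gcongr
    _ ≤ ENNReal.ofReal (B * R) := by
        rw [ENNReal.ofReal_mul hB]
        exact mul_le_mul_right hg _

noncomputable def laplaceConstant (n : ℕ) : ℝ :=
  1 / (((n : ℝ) - 2) * (2 * Real.pi ^ ((n : ℝ) / 2) / Real.Gamma ((n : ℝ) / 2)))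

theorem laplaceConstant_nonneg {n : ℕ} (hn : 2 ≤ n) : 0 ≤ laplaceConstant n := by
  have hn' : (2 : ℝ) ≤ n := by exact_mod_cast hn
  have := Real.Gamma_pos_of_pos (by linarith : (0 : ℝ) < n / 2)
  have := Real.pi_pos
  unfold laplaceConstant
  have : (0 : ℝ) ≤ n - 2 := by linarith
  positivity

theorem fundamentalSolutionLaplace_eq (n : ℕ) (x z : EuclideanSpace ℝ (Fin n)) :
    fundamentalSolutionLaplace n x z = laplaceConstant n * ‖x - z‖ ^ ((2 : ℝ) - n) := by
  rw [fundamentalSolutionLaplace, laplaceConstant, show (2 : ℝ) - n = -(n - 2) by ring,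
    Real.rpow_neg (norm_nonneg _), one_div, one_div, mul_inv]

theorem norm_two_I_sum_sub_le {n : ℕ} {a h : EuclideanSpace ℂ (Fin n)} {q g : ℂ} {M C D s : ℝ}
    (ha : ‖a‖ ≤ M) (hq : ‖q‖ ≤ M) (hh : ‖h‖ ≤ C * s) (hg : ‖g‖ ≤ C * D * s) :
    ‖2 * Complex.I * (∑ j, a j * h j) - q * g‖ ≤ (2 + D) * M * C * s := by
  have hM : 0 ≤ M := (norm_nonneg _).trans ha
  have hCs : 0 ≤ C * s := (norm_nonneg _).trans hh
  calc ‖2 * Complex.I * (∑ j, a j * h j) - q * g‖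
      ≤ 2 * (‖a‖ * ‖h‖) + ‖q‖ * ‖g‖ := by
        refine (norm_sub_le _ _).trans ?_
        rw [norm_mul, norm_mul, norm_mul, Complex.norm_I, Complex.norm_two, mul_one]
        gcongr
        exact norm_sum_mul_le a h
    _ ≤ 2 * (M * (C * s)) + M * (C * D * s) := by gcongr
    _ = (2 + D) * M * C * s := by ring

theorem norm_fundamentalSolutionLaplace_mul_le {n : ℕ} (hn : 2 ≤ n) {x y z : EuclideanSpace ℝ (Fin n)} (hzy : z ≠ y)
    {a h : EuclideanSpace ℂ (Fin n)} {q g : ℂ} {M C D : ℝ} (ha : ‖a‖ ≤ M) (hq : ‖q‖ ≤ M)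
    (hh : ‖h‖ ≤ C * ‖z - y‖ ^ ((1 : ℝ) - n)) (hg : ‖g‖ ≤ C * ‖z - y‖ ^ ((2 : ℝ) - n))
    (hD : ‖z - y‖ ≤ D) :
    ‖(fundamentalSolutionLaplace n x z : ℂ) * (2 * Complex.I * (∑ j, a j * h j) - q * g)‖ ≤
      laplaceConstant n * ((2 + D) * M * C) *
        (‖x - z‖ ^ ((2 : ℝ) - n) * ‖z - y‖ ^ ((1 : ℝ) - n)) := by
  have hC : 0 ≤ C * ‖z - y‖ ^ ((1 : ℝ) - n) := (norm_nonneg _).trans hh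
  have hg' : ‖g‖ ≤ C * D * ‖z - y‖ ^ ((1 : ℝ) - n) := by
    rw [show (2 : ℝ) - n = (1 - n) + 1 by ring,
      Real.rpow_add_one (norm_sub_pos_iff.mpr hzy).ne'] at hg
    nlinarith
  rw [norm_mul, Complex.norm_real, Real.norm_eq_abs, fundamentalSolutionLaplace_eq,
    abs_of_nonneg (by have := laplaceConstant_nonneg hn; positivity)]
  calc _ ≤ laplaceConstant n * ‖x - z‖ ^ ((2 : ℝ) - n) *
        ((2 + D) * M * C * ‖z - y‖ ^ ((1 : ℝ) - n)) := by
        have := laplaceConstant_nonneg hn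
        gcongr
        exact norm_two_I_sum_sub_le ha hq hh hg'
    _ = _ := by ring

theorem stmt_8_general (n : ℕ) (hn : 3 ≤ n)
    (Ω : Set (EuclideanSpace ℝ (Fin n)))
    (hΩo : IsOpen Ω) (hΩb : Bornology.IsBounded Ω)
    (A : EuclideanSpace ℝ (Fin n) → EuclideanSpace ℂ (Fin n))
    (qt : EuclideanSpace ℝ (Fin n) → ℂ)
    (M : ℝ) (hAb : ∀ z ∈ Ω, ‖A z‖ ≤ M) (hqb : ∀ z ∈ Ω, ‖qt z‖ ≤ M)
    (C₀ : ℝ) (hC₀ : 0 < C₀)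
    (G : EuclideanSpace ℝ (Fin n) → EuclideanSpace ℝ (Fin n) → ℂ)
    (H : EuclideanSpace ℝ (Fin n) → EuclideanSpace ℝ (Fin n) → EuclideanSpace ℂ (Fin n))
    (hGb : ∀ z ∈ Ω, ∀ y ∈ Ω, z ≠ y →
      ‖G z y‖ ≤ C₀ * ‖z - y‖ ^ ((2 : ℝ) - n))
    (hHb : ∀ z ∈ Ω, ∀ y ∈ Ω, z ≠ y →
      ‖H z y‖ ≤ C₀ * ‖z - y‖ ^ ((1 : ℝ) - n))
    (heq : ∀ x ∈ Ω, ∀ y ∈ Ω, x ≠ y →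
      G x y = (fundamentalSolutionLaplace n x y : ℂ)
        + ∫ z in Ω, (fundamentalSolutionLaplace n x z : ℂ) *
            (2 * Complex.I * (∑ j : Fin n, A z j * H z y j) - qt z * G z y)) :
    ∃ C > (0 : ℝ), ∀ x ∈ Ω, ∀ y ∈ Ω, 0 < ‖x - y‖ → ‖x - y‖ ≤ 1 / 2 →
      ((n = 3 →
        ‖G x y - (fundamentalSolutionLaplace n x y : ℂ)‖
          ≤ C * Real.log (1 / ‖x - y‖)) ∧
       (4 ≤ n →
        ‖G x y - (fundamentalSolutionLaplace n x y : ℂ)‖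
          ≤ C * ‖x - y‖ ^ ((3 : ℝ) - n))) := by
  have hE : finrank ℝ (EuclideanSpace ℝ (Fin n)) = n := finrank_euclideanSpace_fin
  have : Nontrivial (EuclideanSpace ℝ (Fin n)) :=
    Module.nontrivial_of_finrank_pos (R := ℝ) (by omega)
  set D := diam Ω + 1
  have hD : 1 ≤ D := by linarith [diam_nonneg (s := Ω)]
  have hΩD : ∀ z ∈ Ω, ∀ w ∈ Ω, ‖z - w‖ < D := fun z hz w hw => by
    rw [← dist_eq_norm]; linarith [dist_le_diam_of_mem hΩb hz hw]
  obtain ⟨K, hK0, hK⟩ := lintegral_riesz_kernel_le_remainderRate volume hE hn hD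
  set B := laplaceConstant n * ((2 + D) * max M 0 * C₀)
  have hB : 0 ≤ B := mul_nonneg (laplaceConstant_nonneg (by omega)) (by positivity)
  refine ⟨B * K + 1, by positivity, fun x hx y hy hr hr2 => ?_⟩
  have hrate := remainderRate_nonneg n hr (by linarith)
  have hmain : ‖G x y - (fundamentalSolutionLaplace n x y : ℂ)‖ ≤
      (B * K + 1) * remainderRate n ‖x - y‖ := by
    rw [heq x hx y hy (norm_sub_pos_iff.mp hr), add_sub_cancel_left]
    refine (norm_setIntegral_le_of_ae_norm_le_mul (fun z hz => ?_) hB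
      (mul_nonneg hK0 hrate) ?_ (hK x y hr hr2)).trans ?_
    · simpa [dist_eq_norm] using hΩD z hz x hx
    · filter_upwards [ae_restrict_mem hΩo.measurableSet, ae_restrict_of_ae (volume.ae_ne y)]
        with z hz hzy
      exact norm_fundamentalSolutionLaplace_mul_le (by omega) hzy ((hAb z hz).trans (le_max_left M 0))
        ((hqb z hz).trans (le_max_left M 0)) (hHb z hz y hy hzy) (hGb z hz y hy hzy)
        (hΩD z hz y hy).le
    · nlinarith
  exact ⟨fun h3 => by simpa [remainderRate, h3] using hmain,
    fun h4 => by simpa [remainderRate, show n ≠ 3 by omega] using hmain⟩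

/-- **Asymptotics of the fundamental solution of the magnetic Schrödinger
operator.** If `G`, with gradient-type companion `H`, satisfies the pointwise
bounds `|G(z,y)| ≤ C₀‖z−y‖^{2−n}`, `‖H(z,y)‖ ≤ C₀‖z−y‖^{1−n}` and the integral
equation `G(x,y) = G₀(x,y) + ∫_Ω G₀(x,z)(2i A(z)·H(z,y) − q̃(z) G(z,y)) dz`
on a bounded open set `Ω` with bounded measurable coefficients `A`, `q̃`, then
`G(x,y) − G₀(x,y) = O(log(1/‖x−y‖))` for `n = 3` and `O(‖x−y‖^{3−n})` for
`n ≥ 4`, as `‖x−y‖ → 0`. -/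
theorem stmt_8 (n : ℕ) (hn : 3 ≤ n)
    (Ω : Set (EuclideanSpace ℝ (Fin n)))
    (hΩo : IsOpen Ω) (hΩb : Bornology.IsBounded Ω)
    (A : EuclideanSpace ℝ (Fin n) → EuclideanSpace ℂ (Fin n))
    (qt : EuclideanSpace ℝ (Fin n) → ℂ)
    (hAm : ∀ j : Fin n, Measurable (fun z => A z j)) (hqm : Measurable qt)
    (M : ℝ) (hAb : ∀ z ∈ Ω, ‖A z‖ ≤ M) (hqb : ∀ z ∈ Ω, ‖qt z‖ ≤ M)
    (C₀ : ℝ) (hC₀ : 0 < C₀)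
    (G : EuclideanSpace ℝ (Fin n) → EuclideanSpace ℝ (Fin n) → ℂ)
    (H : EuclideanSpace ℝ (Fin n) → EuclideanSpace ℝ (Fin n) → EuclideanSpace ℂ (Fin n))
    (hGm : Measurable (Function.uncurry G))
    (hHm : ∀ j : Fin n, Measurable (fun p :
      EuclideanSpace ℝ (Fin n) × EuclideanSpace ℝ (Fin n) => H p.1 p.2 j))
    (hGb : ∀ z ∈ Ω, ∀ y ∈ Ω, z ≠ y →
      ‖G z y‖ ≤ C₀ * ‖z - y‖ ^ ((2 : ℝ) - n))
    (hHb : ∀ z ∈ Ω, ∀ y ∈ Ω, z ≠ y →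
      ‖H z y‖ ≤ C₀ * ‖z - y‖ ^ ((1 : ℝ) - n))
    (heq : ∀ x ∈ Ω, ∀ y ∈ Ω, x ≠ y →
      G x y = (fundamentalSolutionLaplace n x y : ℂ)
        + ∫ z in Ω, (fundamentalSolutionLaplace n x z : ℂ) *
            (2 * Complex.I * (∑ j : Fin n, A z j * H z y j) - qt z * G z y)) :
    ∃ C > (0 : ℝ), ∀ x ∈ Ω, ∀ y ∈ Ω, 0 < ‖x - y‖ → ‖x - y‖ ≤ 1 / 2 →
      ((n = 3 →
        ‖G x y - (fundamentalSolutionLaplace n x y : ℂ)‖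
          ≤ C * Real.log (1 / ‖x - y‖)) ∧
       (4 ≤ n →
        ‖G x y - (fundamentalSolutionLaplace n x y : ℂ)‖
          ≤ C * ‖x - y‖ ^ ((3 : ℝ) - n))) :=
  stmt_8_general n hn Ω hΩo hΩb A qt M hAb hqb C₀ hC₀ G H hGb hHb heq
end

section
/- Let n ≥ 3, k > 0 and r₁ > 0. There exist constants C > 0 and δ₁ ∈ (0,1) such that for every δ ∈ (0, δ₁), every measurable set U ⊆ ℝ^{n−1} containing { x' ∈ ℝ^{n−1} : ‖x'‖ ≤ r₁ }, and every measurable function φ : ℝ^{n−1} → ℝ satisfying |φ(x')| ≤ ‖x'‖/2 for all x' ∈ U, the following lower bounds hold: ∫_U ( ‖x'‖² + (φ(x') + δ)² )^{−k/2} dx' ≥ 1/C if k < n−1; ≥ (1/C)·log(1/δ) if k = n−1; and ≥ (1/C)·δ^{n−1−k} if k > n−1. -/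
/-!
Since `|φ x| ≤ ‖x‖ / 2`, at a point with `‖x‖ ≤ R` and `δ ≤ R` the squared distance
`‖x‖² + (φ x + δ)²` is at most `R² + (3R/2)² = (13/4) R²`, so the integrand is at least
`(13/4)^(-k/2) R^(-k)`. Taking `R = r₁` on the ball of radius `r₁` gives a constant lower bound,
taking `R = δ` on the ball of radius `δ` gives `δ^(n-1-k)`, and taking `R = ‖x‖` on the annulus
`δ ≤ ‖x‖ ≤ r₁` gives, in polar coordinates, a multiple of `log (r₁ / δ) ≥ log (1 / δ) / 2`
once `δ ≤ r₁²`.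
-/

open MeasureTheory Metric Set Module

lemma rpow_neg_le_sq_add_sq_rpow {k t p δ R : ℝ} (hk : 0 ≤ k) (hδ : 0 < δ) (ht : 0 ≤ t)
    (hp : |p| ≤ t / 2) (htR : t ≤ R) (hδR : δ ≤ R) :
    (13 / 4 : ℝ) ^ (-k / 2) * R ^ (-k) ≤ (t ^ 2 + (p + δ) ^ 2) ^ (-k / 2) := by
  have hpos : 0 < t ^ 2 + (p + δ) ^ 2 := by
    rcases ht.eq_or_lt with rfl | ht
    · obtain rfl : p = 0 := abs_nonpos_iff.mp (by simpa using hp)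
      positivity
    · positivity
  have hle : t ^ 2 + (p + δ) ^ 2 ≤ 13 / 4 * R ^ 2 := by
    obtain ⟨hp₁, hp₂⟩ := abs_le.mp hp
    nlinarith
  calc (13 / 4 : ℝ) ^ (-k / 2) * R ^ (-k) = (13 / 4 * R ^ 2) ^ (-k / 2) := by
        rw [Real.mul_rpow (by norm_num) (by positivity), ← Real.rpow_natCast,
          ← Real.rpow_mul (by linarith)]
        ring_nf
    _ ≤ _ := Real.rpow_le_rpow_of_nonpos hpos hle (by linarith)

lemma half_log_inv_le_log_div {δ r : ℝ} (hδ : 0 < δ) (hr : 0 < r) (hδr : δ ≤ r ^ 2) :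
    Real.log (1 / δ) / 2 ≤ Real.log (r / δ) := by
  have := Real.log_le_log hδ hδr
  rw [Real.log_pow] at this
  rw [Real.log_div hr.ne' hδ.ne', one_div, Real.log_inv]
  push_cast at this
  linarith

lemma const_mul_measure_le_setLIntegral {α : Type*} [MeasurableSpace α] {μ : Measure α}
    {f : α → ENNReal} {A U : Set α} (hA : MeasurableSet A) (hAU : A ⊆ U) {c : ENNReal}
    (hc : ∀ x ∈ A, c ≤ f x) : c * μ A ≤ ∫⁻ x in U, f x ∂μ :=
  calc c * μ A = ∫⁻ _ in A, c ∂μ := (setLIntegral_const A c).symm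
    _ ≤ ∫⁻ x in A, f x ∂μ := setLIntegral_mono_ae' hA (.of_forall hc)
    _ ≤ ∫⁻ x in U, f x ∂μ := lintegral_mono_set hAU

variable {E : Type*} [NormedAddCommGroup E]

/-- The integrand `‖x - x_δ‖ ^ (-k)` at the boundary point `(x, φ x)`, for the pole
`x_δ = (0, -δ)`. -/
noncomputable def poleKernel (φ : E → ℝ) (k δ : ℝ) (x : E) : ENNReal :=
  ENNReal.ofReal ((‖x‖ ^ 2 + (φ x + δ) ^ 2) ^ (-k / 2))

lemma ofReal_le_poleKernel {φ : E → ℝ} {k δ R : ℝ} {x : E} (hk : 0 ≤ k) (hδ : 0 < δ)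
    (hδR : δ ≤ R) (hxR : ‖x‖ ≤ R) (hφx : |φ x| ≤ ‖x‖ / 2) :
    ENNReal.ofReal ((13 / 4 : ℝ) ^ (-k / 2) * R ^ (-k)) ≤ poleKernel φ k δ x :=
  ENNReal.ofReal_le_ofReal (rpow_neg_le_sq_add_sq_rpow hk hδ (norm_nonneg x) hφx hxR hδR)

variable [NormedSpace ℝ E] [FiniteDimensional ℝ E] [MeasurableSpace E] [BorelSpace E]
  (μ : Measure E) [μ.IsAddHaarMeasure]

lemma setIntegral_annulus_norm_rpow_neg_finrank [Nontrivial E] {a b : ℝ} (ha : 0 < a)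
    (hab : a ≤ b) :
    ∫ x in closedBall (0 : E) b \ ball 0 a, ‖x‖ ^ (-(finrank ℝ E : ℝ)) ∂μ =
      finrank ℝ E * μ.real (ball 0 1) * Real.log (b / a) := by
  set d := finrank ℝ E
  have hradial : (closedBall (0 : E) b \ ball 0 a).indicator (‖·‖ ^ (-(d : ℝ))) =
      fun x => (Icc a b).indicator (· ^ (-(d : ℝ))) ‖x‖ := by
    ext x
    simp only [indicator, mem_sdiff, mem_closedBall_zero_iff, mem_ball_zero_iff, not_lt, mem_Icc,
      and_comm]
  have hpolar : ∫ y in Ioi (0 : ℝ), y ^ (d - 1) • (Icc a b).indicator (· ^ (-(d : ℝ))) y =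
      Real.log (b / a) := by
    have hinv : ∀ y ∈ Ioi (0 : ℝ),
        y ^ (d - 1) • (Icc a b).indicator (· ^ (-(d : ℝ))) y = (Icc a b).indicator (·⁻¹) y := by
      intro y (hy : 0 < y)
      by_cases hyab : y ∈ Icc a b
      · have hd : d - 1 + 1 = d := Nat.sub_add_cancel finrank_pos
        simp only [indicator_of_mem hyab, smul_eq_mul, Real.rpow_neg hy.le, Real.rpow_natCast]
        rw [← hd, pow_succ, Nat.add_sub_cancel]
        field_simp
      · simp [hyab]
    rw [setIntegral_congr_fun measurableSet_Ioi hinv, setIntegral_indicator measurableSet_Icc,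
      inter_eq_right.mpr (show Icc a b ⊆ Ioi 0 from fun y hy => ha.trans_le hy.1),
      integral_Icc_eq_integral_Ioc, ← intervalIntegral.integral_of_le hab,
      integral_inv_of_pos ha (ha.trans_le hab)]
  rw [← integral_indicator (measurableSet_closedBall.diff measurableSet_ball), hradial,
    integral_fun_norm_addHaar μ, hpolar, nsmul_eq_mul, smul_eq_mul, mul_assoc]

section PoleKernelBounds

variable {μ} {φ : E → ℝ} {k δ : ℝ} {U : Set E} (hφ : ∀ x ∈ U, |φ x| ≤ ‖x‖ / 2)
include hφ

lemma ofReal_le_setLIntegral_poleKernel_of_closedBall_subset {r : ℝ} (hk : 0 ≤ k) (hδ : 0 < δ)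
    (hδr : δ ≤ r) (hU : closedBall 0 r ⊆ U) :
    ENNReal.ofReal ((13 / 4 : ℝ) ^ (-k / 2) * r ^ (-k) * r ^ finrank ℝ E * μ.real (ball 0 1)) ≤
      ∫⁻ x in U, poleKernel φ k δ x ∂μ := by
  have hr : 0 ≤ r := hδ.le.trans hδr
  calc ENNReal.ofReal ((13 / 4 : ℝ) ^ (-k / 2) * r ^ (-k) * r ^ finrank ℝ E * μ.real (ball 0 1))
      = ENNReal.ofReal ((13 / 4 : ℝ) ^ (-k / 2) * r ^ (-k)) * μ (closedBall 0 r) := by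
        rw [Measure.addHaar_closedBall μ 0 hr, ← ofReal_measureReal measure_ball_lt_top.ne,
          ← ENNReal.ofReal_mul (by positivity), ← ENNReal.ofReal_mul (by positivity), mul_assoc]
    _ ≤ _ := const_mul_measure_le_setLIntegral measurableSet_closedBall hU fun x hx =>
        ofReal_le_poleKernel hk hδ hδr (mem_closedBall_zero_iff.mp hx) (hφ x (hU hx))

lemma ofReal_le_setLIntegral_poleKernel_of_ball_subset (hk : 0 ≤ k) (hδ : 0 < δ)
    (hU : ball 0 δ ⊆ U) :
    ENNReal.ofReal ((13 / 4 : ℝ) ^ (-k / 2) * μ.real (ball 0 1) * δ ^ ((finrank ℝ E : ℝ) - k)) ≤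
      ∫⁻ x in U, poleKernel φ k δ x ∂μ := by
  calc ENNReal.ofReal ((13 / 4 : ℝ) ^ (-k / 2) * μ.real (ball 0 1) * δ ^ ((finrank ℝ E : ℝ) - k))
      = ENNReal.ofReal ((13 / 4 : ℝ) ^ (-k / 2) * δ ^ (-k)) * μ (ball 0 δ) := by
        rw [Measure.addHaar_ball_of_pos μ 0 hδ, ← ofReal_measureReal measure_ball_lt_top.ne,
          ← ENNReal.ofReal_mul (by positivity), ← ENNReal.ofReal_mul (by positivity),
          sub_eq_add_neg, Real.rpow_add hδ, Real.rpow_natCast]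
        ring_nf
    _ ≤ _ := const_mul_measure_le_setLIntegral measurableSet_ball hU fun x hx =>
        ofReal_le_poleKernel hk hδ le_rfl (mem_ball_zero_iff.mp hx).le (hφ x (hU hx))

lemma ofReal_log_le_setLIntegral_poleKernel_finrank [Nontrivial E] {r : ℝ} (hr : 0 < r)
    (hδ : 0 < δ) (hδr : δ ≤ r) (hδr₂ : δ ≤ r ^ 2) (hU : closedBall 0 r ⊆ U) :
    ENNReal.ofReal ((13 / 4 : ℝ) ^ (-(finrank ℝ E : ℝ) / 2) * finrank ℝ E * μ.real (ball 0 1) / 2 *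
        Real.log (1 / δ)) ≤
      ∫⁻ x in U, poleKernel φ (finrank ℝ E) δ x ∂μ := by
  set d : ℝ := (finrank ℝ E : ℝ) with hd
  set c := (13 / 4 : ℝ) ^ (-d / 2)
  set A := closedBall (0 : E) r \ ball 0 δ
  have hA : MeasurableSet A := measurableSet_closedBall.diff measurableSet_ball
  have hAU : A ⊆ U := sdiff_subset.trans hU
  have hnorm : ∀ x ∈ A, δ ≤ ‖x‖ ∧ ‖x‖ ≤ r := fun x hx =>
    ⟨not_lt.mp (mem_ball_zero_iff.not.mp hx.2), mem_closedBall_zero_iff.mp hx.1⟩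
  have hint : IntegrableOn (fun x : E => c * ‖x‖ ^ (-d)) A μ := by
    refine ContinuousOn.integrableOn_compact ((isCompact_closedBall 0 r).diff isOpen_ball) ?_
    exact continuousOn_const.mul <| continuous_norm.continuousOn.rpow_const fun x hx =>
      .inl (hδ.trans_le (hnorm x hx).1).ne'
  calc ENNReal.ofReal (c * d * μ.real (ball 0 1) / 2 * Real.log (1 / δ))
      ≤ ENNReal.ofReal (c * d * μ.real (ball 0 1) * Real.log (r / δ)) := by
        refine ENNReal.ofReal_le_ofReal ?_
        have := mul_le_mul_of_nonneg_left (half_log_inv_le_log_div hδ hr hδr₂)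
          (by positivity : 0 ≤ c * d * μ.real (ball 0 1))
        linarith
    _ = ENNReal.ofReal (∫ x in A, c * ‖x‖ ^ (-d) ∂μ) := by
        rw [integral_const_mul, setIntegral_annulus_norm_rpow_neg_finrank μ hδ hδr, ← hd]
        ring_nf
    _ = ∫⁻ x in A, ENNReal.ofReal (c * ‖x‖ ^ (-d)) ∂μ :=
        ofReal_integral_eq_lintegral_ofReal hint (.of_forall fun x => by positivity)
    _ ≤ ∫⁻ x in A, poleKernel φ d δ x ∂μ := setLIntegral_mono_ae' hA <| .of_forall fun x hx =>
        ofReal_le_poleKernel (by positivity) hδ (hnorm x hx).1 le_rfl (hφ x (hAU hx))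
    _ ≤ _ := lintegral_mono_set hAU

end PoleKernelBounds

/-- Lower surface estimates in graph coordinates: for `n ≥ 3`, `k > 0`,
`r₁ > 0`, there are `C > 0` and `δ₁ ∈ (0,1)` such that for all `δ ∈ (0,δ₁)`,
all measurable `U ⊆ ℝ^{n−1}` containing `{‖x'‖ ≤ r₁}` and all measurable
`φ : ℝ^{n−1} → ℝ` with `|φ(x')| ≤ ‖x'‖/2` on `U`:
`∫_U (‖x'‖² + (φ(x')+δ)²)^{−k/2} dx'` is bounded below by `1/C` if `k < n−1`,
by `(1/C) log(1/δ)` if `k = n−1`, and by `(1/C) δ^{n−1−k}` if `k > n−1`. -/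
theorem stmt_13 (n : ℕ) (hn : 3 ≤ n) (k : ℝ) (hk : 0 < k) (r₁ : ℝ) (hr₁ : 0 < r₁) :
    ∃ C > (0 : ℝ), ∃ δ₁ ∈ Set.Ioo (0 : ℝ) 1, ∀ δ ∈ Set.Ioo (0 : ℝ) δ₁,
      ∀ U : Set (EuclideanSpace ℝ (Fin (n - 1))), MeasurableSet U →
        Metric.closedBall 0 r₁ ⊆ U →
        ∀ φ : EuclideanSpace ℝ (Fin (n - 1)) → ℝ, Measurable φ →
          (∀ x' ∈ U, |φ x'| ≤ ‖x'‖ / 2) →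
          ((k < (n : ℝ) - 1 →
              ENNReal.ofReal (1 / C)
                ≤ ∫⁻ x' in U,
                    ENNReal.ofReal ((‖x'‖ ^ 2 + (φ x' + δ) ^ 2) ^ (-k / 2))) ∧
           (k = (n : ℝ) - 1 →
              ENNReal.ofReal ((1 / C) * Real.log (1 / δ))
                ≤ ∫⁻ x' in U,
                    ENNReal.ofReal ((‖x'‖ ^ 2 + (φ x' + δ) ^ 2) ^ (-k / 2))) ∧
           ((n : ℝ) - 1 < k →
              ENNReal.ofReal ((1 / C) * δ ^ ((n : ℝ) - 1 - k))
                ≤ ∫⁻ x' in U,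
                    ENNReal.ofReal ((‖x'‖ ^ 2 + (φ x' + δ) ^ 2) ^ (-k / 2)))) := by
  have : Nonempty (Fin (n - 1)) := ⟨⟨0, by omega⟩⟩
  have hd : (finrank ℝ (EuclideanSpace ℝ (Fin (n - 1))) : ℝ) = n - 1 := by
    rw [finrank_euclideanSpace_fin, Nat.cast_sub (by omega), Nat.cast_one]
  set d := finrank ℝ (EuclideanSpace ℝ (Fin (n - 1)))
  set B := volume.real (ball (0 : EuclideanSpace ℝ (Fin (n - 1))) 1)
  have hB : 0 < B := ENNReal.toReal_pos (measure_ball_pos _ 0 one_pos).ne' measure_ball_lt_top.ne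
  set c := (13 / 4 : ℝ) ^ (-k / 2)
  refine ⟨(min (c * r₁ ^ (-k) * r₁ ^ d * B) (min (c * k * B / 2) (c * B)))⁻¹, by positivity,
    min (1 / 2) (min r₁ (r₁ ^ 2)), ⟨by positivity, (min_le_left _ _).trans_lt (by norm_num)⟩, ?_⟩
  rintro δ ⟨hδ, hδ₁⟩ U - hU φ - hφ
  obtain ⟨hδ_half, hδr, hδr₂⟩ : δ < 1 / 2 ∧ δ < r₁ ∧ δ < r₁ ^ 2 := by simpa using hδ₁
  rw [one_div, inv_inv]
  refine ⟨fun _ => ?_, fun hkd => ?_, fun _ => ?_⟩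
  · exact (ENNReal.ofReal_le_ofReal (min_le_left _ _)).trans
      (ofReal_le_setLIntegral_poleKernel_of_closedBall_subset hφ hk.le hδ hδr.le hU)
  · obtain rfl : k = d := hkd.trans hd.symm
    have hlog : 0 ≤ Real.log (1 / δ) := Real.log_nonneg (one_le_one_div hδ (by linarith))
    exact (ENNReal.ofReal_le_ofReal (mul_le_mul_of_nonneg_right
        ((min_le_right _ _).trans (min_le_left _ _)) hlog)).trans
      (ofReal_log_le_setLIntegral_poleKernel_finrank hφ hr₁ hδ hδr.le hδr₂.le hU)
  · rw [← hd]
    exact (ENNReal.ofReal_le_ofReal (mul_le_mul_of_nonneg_right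
        ((min_le_right _ _).trans (min_le_right _ _)) (by positivity))).trans
      (ofReal_le_setLIntegral_poleKernel_of_ball_subset hφ hk.le hδ
        (ball_subset_closedBall.trans ((closedBall_subset_closedBall hδr.le).trans hU)))
end
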